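/- arXiv:1603.00196 — 6 statements merged into one kernel-verified Lean document; each statement's English description precedes it below -/
import Mathlib

section
/- Let u^{(0)},…,u^{(d-1)} be functions on {1,…,d} with u^{(0)} ≡ 1 satisfying ∑_{i=1}^d u_i^{(l)} u_i^{(m)} p_i = a_l δ_{lm}. Define Q_n(x;u) as the coefficient of w_1^{n_1}⋯w_{d-1}^{n_{d-1}} in G(x,w,u) = ∏_{j=1}^d (1 + ∑_{l=1}^{d-1} w_l u_j^{(l)})^{x_j}. Then ∑_{|x|=N} Q_m(x;u) Q_n(x;u) m(x;p) = δ_{mn} multinomial(N; n_0,n_1,…,n_{d-1}) ∏_{j=1}^{d-1} a_j^{n_j}, where n_0 = N - ∑_{j=1}^{d-1} n_j and m(x;p) is the multinomial probability. -/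
open MvPolynomial

/-- Multinomial probability `m(x;p)` (when `|x| = N`). -/
noncomputable def multinomialPMF (d : ℕ) (p : Fin d → ℝ) (x : Fin d → ℕ) : ℝ :=
  (Nat.multinomial Finset.univ x : ℝ) * ∏ j, p j ^ x j

/-- Multivariate Krawtchouk polynomial `Q_n(x;u)`: the coefficient of
`∏_{l≠0} w_l^{n_l}` in `∏_j (1 + ∑_{l≠0} w_l u^{(l)}_j)^{x_j}`. -/
noncomputable def QK (d : ℕ) [NeZero d] (u : Fin d → Fin d → ℝ) (n x : Fin d → ℕ) : ℝ :=
  MvPolynomial.coeff (Finsupp.equivFunOnFinite.symm n)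
    (∏ j, (1 + ∑ l ∈ Finset.univ.erase 0, MvPolynomial.X l * MvPolynomial.C (u l j)) ^ x j)

/-!
Multiply the generating functions `G(x, w)` and `G(x, z)` in two independent sets of variables
and average over the multinomial distribution: by the multinomial theorem this gives
`(∑_j p_j G_j(w) G_j(z))^N`, where `G_j(w) = ∑_l u_j^{(l)} w_l` with `w_0 = 1`. Orthogonality of
the `u^{(l)}` collapses the base to `∑_l a_l w_l z_l = 1 + ∑_{l ≥ 1} a_l w_l z_l`, whose `N`-th power
only involves monomials in the products `w_l z_l`; comparing coefficients of `w^m z^n` gives the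
relation.
-/

open Finset

theorem sum_smul_mul_sum_smul_of_orthogonal {R A ι κ : Type*} [CommSemiring R] [CommSemiring A]
    [Algebra R A] [Fintype ι] [Fintype κ] [DecidableEq ι] {u : ι → κ → R} {p : κ → R}
    {a : ι → R} (horth : ∀ l m, ∑ j, u l j * u m j * p j = if l = m then a l else 0)
    (w z : ι → A) :
    ∑ j, p j • ((∑ l, u l j • w l) * ∑ m, u m j • z m) = ∑ l, a l • (w l * z l) := by
  simp_rw [sum_mul_sum, smul_sum, smul_mul_smul, smul_smul]
  rw [sum_comm]
  refine sum_congr rfl fun l _ => ?_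
  rw [sum_comm]
  simp_rw [← sum_smul, mul_comm (p _), horth, ite_smul, zero_smul, sum_ite_eq, mem_univ, if_true]

variable {σ R : Type*} [CommSemiring R]

/-- `outerVars f * innerVars g` models `f(w) g(z)` for two disjoint copies `w`, `z` of the
variables: `w` are the outer variables of `MvPolynomial σ (MvPolynomial σ R)`, `z` the inner
ones. -/
noncomputable def outerVars : MvPolynomial σ R →ₐ[R] MvPolynomial σ (MvPolynomial σ R) :=
  mapAlgHom (Algebra.ofId R _)

noncomputable def innerVars : MvPolynomial σ R →ₐ[R] MvPolynomial σ (MvPolynomial σ R) :=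
  IsScalarTower.toAlgHom R _ _

theorem coeff_coeff_outerVars_mul_innerVars (f g : MvPolynomial σ R) (m n : σ →₀ ℕ) :
    coeff n (coeff m (outerVars f * innerVars g)) = coeff m f * coeff n g := by
  change coeff n (coeff m (map C f * C g)) = _
  rw [mul_comm, coeff_C_mul, coeff_map, mul_comm, coeff_C_mul]

theorem coeff_coeff_sum_smul_pow {ι : Type*} [Fintype ι] [DecidableEq ι] (c : ι → R)
    (F : ι → MvPolynomial σ R) (N : ℕ) (m n : σ →₀ ℕ) :
    coeff n (coeff m ((∑ i, c i • (outerVars (F i) * innerVars (F i))) ^ N)) =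
      ∑ x ∈ piAntidiag univ N, (Nat.multinomial univ x : R) * (∏ i, c i ^ x i) *
        coeff m (∏ i, F i ^ x i) * coeff n (∏ i, F i ^ x i) := by
  rw [sum_pow_eq_sum_piAntidiag, coeff_sum, coeff_sum]
  refine sum_congr rfl fun x _ => ?_
  have hprod : (∏ i, (c i • (outerVars (F i) * innerVars (F i))) ^ x i) =
      (∏ i, c i ^ x i) • (outerVars (∏ i, F i ^ x i) * innerVars (∏ i, F i ^ x i)) := by
    simp only [Algebra.smul_def, mul_pow, prod_mul_distrib, map_prod, map_pow]
  rw [hprod, ← map_natCast (algebraMap R _), ← Algebra.smul_def, smul_smul, coeff_smul,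
    coeff_smul, coeff_coeff_outerVars_mul_innerVars, smul_eq_mul]
  ring

variable [Fintype σ] [DecidableEq σ]

theorem prod_update_X_pow (i₀ : σ) (y : σ → ℕ) :
    ∏ l, Function.update (X : σ → MvPolynomial σ R) i₀ 1 l ^ y l =
      monomial (Finsupp.equivFunOnFinite.symm (Function.update y i₀ 0)) 1 := by
  rw [monomial_eq, C_1, one_mul, Finsupp.prod_fintype _ _ fun _ => pow_zero _]
  refine prod_congr rfl fun l _ => ?_
  rcases eq_or_ne l i₀ with rfl | hl
  · simp
  · simp [Function.update_of_ne hl]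

theorem one_add_sum_erase_X_mul_C_eq {u : σ → R} (i₀ : σ) (hu : u i₀ = 1) :
    1 + ∑ l ∈ univ.erase i₀, X l * C (u l) =
      ∑ l, u l • Function.update (X : σ → MvPolynomial σ R) i₀ 1 l := by
  rw [← add_sum_erase _ _ (mem_univ i₀), Function.update_self, hu, one_smul]
  refine congrArg _ (sum_congr rfl fun l hl => ?_)
  rw [Function.update_of_ne (ne_of_mem_erase hl), smul_eq_C_mul, mul_comm]

theorem update_eq_iff_eq_update_of_mem_piAntidiag {N : ℕ} {n y : σ → ℕ} (i₀ : σ)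
    (hn0 : n i₀ = 0) (hy : y ∈ piAntidiag univ N) :
    Function.update y i₀ 0 = n ↔ y = Function.update n i₀ (N - ∑ i, n i) := by
  have hsum := (mem_piAntidiag.mp hy).1
  constructor
  · rintro rfl
    rw [Function.update_idem, eq_comm, Function.update_eq_self_iff,
      sum_update_of_mem (mem_univ i₀), ← hsum,
      sum_eq_add_sum_sdiff_singleton_of_mem (mem_univ i₀)]
    omega
  · rintro rfl
    rw [Function.update_idem, Function.update_eq_self_iff, hn0]

theorem sum_multinomial_mul_coeff_mul_coeff_prod_update_X_pow {N : ℕ} (i₀ : σ) {a : σ → R}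
    (ha : a i₀ = 1) (m : σ → ℕ) {n : σ → ℕ} (hn0 : n i₀ = 0) (hn : ∑ i, n i ≤ N) :
    ∑ y ∈ piAntidiag univ N, (Nat.multinomial univ y : R) * (∏ i, a i ^ y i) *
        coeff (Finsupp.equivFunOnFinite.symm m)
          (∏ l, Function.update (X : σ → MvPolynomial σ R) i₀ 1 l ^ y l) *
        coeff (Finsupp.equivFunOnFinite.symm n)
          (∏ l, Function.update (X : σ → MvPolynomial σ R) i₀ 1 l ^ y l) =
      if m = n then
        (Nat.multinomial univ (fun j => if j = i₀ then N - ∑ i, n i else n j) : R) *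
          ∏ j ∈ univ.erase i₀, a j ^ n j
      else 0 := by
  simp_rw [prod_update_X_pow, coeff_monomial, Equiv.apply_eq_iff_eq]
  split_ifs with hmn
  · subst hmn
    set y₀ := Function.update m i₀ (N - ∑ i, m i)
    have hy₀ : y₀ ∈ piAntidiag univ N := by
      refine mem_piAntidiag.mpr ⟨?_, fun i _ => mem_univ i⟩
      rw [sum_update_of_mem (mem_univ i₀)]
      have := sum_eq_add_sum_sdiff_singleton_of_mem (mem_univ i₀) m
      omega
    calc _ = ∑ y ∈ piAntidiag univ N,
          if y = y₀ then (Nat.multinomial univ y : R) * ∏ i, a i ^ y i else 0 := by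
          refine sum_congr rfl fun y hy => ?_
          simp only [update_eq_iff_eq_update_of_mem_piAntidiag i₀ hn0 hy]
          split_ifs <;> simp
      _ = _ := by
          rw [sum_ite_eq', if_pos hy₀, ← mul_prod_erase _ _ (mem_univ i₀), ha, one_pow,
            one_mul]
          congr 1
          · exact congrArg (fun y => (Nat.multinomial univ y : R))
              (funext fun j => Function.update_apply m i₀ _ j)
          · exact prod_congr rfl fun j hj => by
              rw [show y₀ j = m j from Function.update_of_ne (ne_of_mem_erase hj) _ m]
  · refine sum_eq_zero fun y _ => ?_
    split_ifs with hm hn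
    · exact absurd (hm.symm.trans hn) hmn
    all_goals simp

theorem multivariate_krawtchouk_orthogonality_general
    (d N : ℕ) [NeZero d]
    (p : Fin d → ℝ) (hpsum : ∑ j, p j = 1)
    (u : Fin d → Fin d → ℝ) (hu0 : ∀ j, u 0 j = 1)
    (a : Fin d → ℝ)
    (horth : ∀ l m, ∑ i, u l i * u m i * p i = if l = m then a l else 0)
    (m n : Fin d → ℕ) (hn0 : n 0 = 0)
    (hn : ∑ j, n j ≤ N) :
    ∑ x ∈ Finset.Nat.antidiagonalTuple d N,
        QK d u m x * QK d u n x * multinomialPMF d p x =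
      if m = n then
        (Nat.multinomial Finset.univ
            (fun j => if j = 0 then N - ∑ i, n i else n j) : ℝ) *
          ∏ j ∈ Finset.univ.erase 0, a j ^ n j
      else 0 := by
  set E := Function.update (X : Fin d → MvPolynomial (Fin d) ℝ) 0 1
  set G := fun j => ∑ l, u l j • E l
  have hG : ∀ j, 1 + ∑ l ∈ univ.erase 0, X l * C (u l j) = G j :=
    fun j => one_add_sum_erase_X_mul_C_eq 0 (hu0 j)
  have ha0 : a 0 = 1 := by simpa [hu0, hpsum] using (horth 0 0).symm
  have hgen : ∑ j, p j • (outerVars (G j) * innerVars (G j)) =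
      ∑ l, a l • (outerVars (E l) * innerVars (E l)) := by
    simp only [G, map_sum, map_smul]
    exact sum_smul_mul_sum_smul_of_orthogonal horth _ _
  rw [← piAntidiag_univ_fin_eq_antidiagonalTuple]
  calc _ = ∑ x ∈ piAntidiag univ N, (Nat.multinomial univ x : ℝ) * (∏ j, p j ^ x j) *
          coeff (Finsupp.equivFunOnFinite.symm m) (∏ j, G j ^ x j) *
          coeff (Finsupp.equivFunOnFinite.symm n) (∏ j, G j ^ x j) := by
        refine sum_congr rfl fun x _ => ?_
        simp only [QK, multinomialPMF, hG]
        ring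
    _ = coeff (Finsupp.equivFunOnFinite.symm n) (coeff (Finsupp.equivFunOnFinite.symm m)
          ((∑ l, a l • (outerVars (E l) * innerVars (E l))) ^ N)) := by
        rw [← hgen, coeff_coeff_sum_smul_pow]
    _ = _ := by
        rw [coeff_coeff_sum_smul_pow]
        exact sum_multinomial_mul_coeff_mul_coeff_prod_update_X_pow 0 ha0 m hn0 hn

/-- Orthogonality of the multivariate Krawtchouk polynomials on the multinomial
distribution. -/
theorem multivariate_krawtchouk_orthogonality
    (d N : ℕ) [NeZero d] (hd : 2 ≤ d)
    (p : Fin d → ℝ) (hp : ∀ j, 0 < p j) (hpsum : ∑ j, p j = 1)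
    (u : Fin d → Fin d → ℝ) (hu0 : ∀ j, u 0 j = 1)
    (a : Fin d → ℝ) (ha : ∀ l, 0 < a l)
    (horth : ∀ l m, ∑ i, u l i * u m i * p i = if l = m then a l else 0)
    (m n : Fin d → ℕ) (hm0 : m 0 = 0) (hn0 : n 0 = 0)
    (hm : ∑ j, m j ≤ N) (hn : ∑ j, n j ≤ N) :
    ∑ x ∈ Finset.Nat.antidiagonalTuple d N,
        QK d u m x * QK d u n x * multinomialPMF d p x =
      if m = n then
        (Nat.multinomial Finset.univ
            (fun j => if j = 0 then N - ∑ i, n i else n j) : ℝ) *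
          ∏ j ∈ Finset.univ.erase 0, a j ^ n j
      else 0 :=
  multivariate_krawtchouk_orthogonality_general d N p hpsum u hu0 a horth m n hn0 hn
end

section
/- The multivariate Krawtchouk polynomials satisfy the dual orthogonality relation: ∑_{n : |n| ≤ N} multinomial(N; n^+)^{-1} ∏_{j=1}^{d-1} a_j^{-n_j} Q_n(x;u) Q_n(y;u) = δ_{xy} m(x;p)^{-1} for all x, y with |x| = |y| = N. -/
open MvPolynomial

/-!
With `P_j(w) = 1 + ∑_{l ≥ 1} w_l u_j^{(l)}`, the `Q_n(x)` are the coefficients of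
`∏_j P_j(w)^{x_j}`. Summing `m(x;p) ∏_j (P_j(w) P_j(z))^{x_j}` over `|x| = N` gives, by the
multinomial theorem and the orthogonality of the `u^{(l)}`,
`(∑_j p_j P_j(w) P_j(z))^N = (1 + ∑_{l ≥ 1} a_l w_l z_l)^N`; comparing coefficients of
`w^n z^m` yields the primal relation
`∑_x m(x;p) Q_n(x) Q_m(x) = δ_{nm} multinomial(N; n⁺) ∏ a_l^{n_l}`.
Since `n ↦ n⁺` is a bijection onto `{x : |x| = N}`, the matrix `K = (Q_n(x))` is square, and
`Kᵀ D K = C` with diagonal invertible `D`, `C` forces `K C⁻¹ Kᵀ = D⁻¹`: the dual relation.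
-/

open Finset Function
open scoped Matrix

theorem Matrix.mul_diagonal_inv_mul_transpose_of_transpose_mul_diagonal_mul {m K : Type*}
    [Fintype m] [DecidableEq m] [Field K] {A : Matrix m m K} {w c : m → K}
    (hw : ∀ i, w i ≠ 0) (hc : ∀ i, c i ≠ 0) (h : Aᵀ * diagonal w * A = diagonal c) :
    A * diagonal c⁻¹ * Aᵀ = diagonal w⁻¹ := by
  have hleft : (diagonal c⁻¹ * Aᵀ * diagonal w) * A = 1 := by
    simp only [Matrix.mul_assoc] at h ⊢
    simp [h, inv_mul_cancel₀ (hc _)]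
  calc A * diagonal c⁻¹ * Aᵀ = A * (diagonal c⁻¹ * Aᵀ * diagonal w) * diagonal w⁻¹ := by
        simp [Matrix.mul_assoc, mul_inv_cancel₀ (hw _)]
    _ = diagonal w⁻¹ := by rw [mul_eq_one_comm.mp hleft, Matrix.one_mul]

theorem Finset.sum_inv_mul_mul_eq_of_sum_mul_mul_eq {ι K : Type*} [DecidableEq ι] [Field K]
    (s : Finset ι) (Q : ι → ι → K) (w c : ι → K) (hw : ∀ x ∈ s, w x ≠ 0)
    (hc : ∀ i ∈ s, c i ≠ 0)
    (horth : ∀ i ∈ s, ∀ j ∈ s, ∑ x ∈ s, w x * Q i x * Q j x = if i = j then c i else 0)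
    {x y : ι} (hx : x ∈ s) (hy : y ∈ s) :
    ∑ i ∈ s, (c i)⁻¹ * Q i x * Q i y = if x = y then (w x)⁻¹ else 0 := by
  let A : Matrix s s K := Matrix.of fun z i => Q i z
  have hA : Aᵀ * Matrix.diagonal (fun z : s => w z) * A = Matrix.diagonal fun i : s => c i := by
    ext i j
    rw [Matrix.mul_apply, Matrix.diagonal_apply]
    simp only [Subtype.ext_iff]
    rw [← horth i i.2 j j.2, ← sum_coe_sort s]
    simp only [A, Matrix.mul_diagonal, Matrix.transpose_apply, Matrix.of_apply]
    exact sum_congr rfl fun z _ => by ring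
  have hdual := congrFun₂ (Matrix.mul_diagonal_inv_mul_transpose_of_transpose_mul_diagonal_mul
    (A := A) (fun z => hw z z.2) (fun i => hc i i.2) hA) ⟨x, hx⟩ ⟨y, hy⟩
  rw [Matrix.mul_apply, Matrix.diagonal_apply] at hdual
  simp only [Subtype.mk.injEq, Pi.inv_apply] at hdual
  rw [← hdual, ← sum_coe_sort s]
  simp only [A, Matrix.mul_diagonal, Matrix.transpose_apply, Matrix.of_apply, Pi.inv_apply]
  exact sum_congr rfl fun i _ => by ring

theorem Finset.sum_map_mul_sum_mul_sum_eq_of_orthogonal {ι κ R S : Type*} [Fintype ι]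
    [Fintype κ] [DecidableEq κ] [CommSemiring R] [CommSemiring S] (φ : R →+* S)
    {p : ι → R} {u : κ → ι → R} {a : κ → R}
    (horth : ∀ l m, ∑ i, u l i * u m i * p i = if l = m then a l else 0) (v w : κ → S) :
    ∑ i, φ (p i) * ((∑ l, φ (u l i) * v l) * ∑ m, φ (u m i) * w m) =
      ∑ l, φ (a l) * (v l * w l) := by
  calc ∑ i, φ (p i) * ((∑ l, φ (u l i) * v l) * ∑ m, φ (u m i) * w m)
      = ∑ m, ∑ l, φ (∑ i, u l i * u m i * p i) * (v l * w m) := by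
        simp only [mul_sum, map_sum, sum_mul, map_mul]
        refine sum_comm.trans (sum_congr rfl fun m _ => sum_comm.trans
          (sum_congr rfl fun l _ => sum_congr rfl fun i _ => by ring))
    _ = ∑ l, φ (a l) * (v l * w l) := by simp [horth, apply_ite φ]

theorem MvPolynomial.coeff_coeff_map_C_mul_C {σ R : Type*} [CommSemiring R]
    (f g : MvPolynomial σ R) (n m : σ →₀ ℕ) :
    coeff m (coeff n (map C f * C g)) = coeff n f * coeff m g := by
  rw [mul_comm, coeff_C_mul, coeff_map, mul_comm, coeff_C_mul]

namespace MultivariateKrawtchouk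

variable {d : ℕ} [NeZero d]

theorem sum_eq_apply_zero_add_sum_update_zero (k : Fin d → ℕ) :
    ∑ i, k i = k 0 + ∑ i, update k 0 0 i := by
  rw [sum_update_of_mem (mem_univ 0), sdiff_singleton_eq_erase, zero_add,
    add_sum_erase _ _ (mem_univ 0)]

theorem update_zero_inj {k k' : Fin d → ℕ} (hsum : ∑ i, k i = ∑ i, k' i) :
    update k 0 0 = update k' 0 0 ↔ k = k' := by
  refine ⟨fun h => ?_, fun h => h ▸ rfl⟩
  have h0 : k 0 = k' 0 := by
    rw [sum_eq_apply_zero_add_sum_update_zero k, sum_eq_apply_zero_add_sum_update_zero k', h]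
      at hsum
    omega
  calc k = update (update k 0 0) 0 (k 0) := by simp
    _ = update (update k' 0 0) 0 (k' 0) := by rw [h, h0]
    _ = k' := by simp

/-- The paper's `n⁺ = (N - |n|, n₁, …, n_{d-1})`. -/
def augment (N : ℕ) (n : Fin d → ℕ) : Fin d → ℕ := fun j => if j = 0 then N - ∑ i, n i else n j

theorem augment_apply_zero (N : ℕ) (n : Fin d → ℕ) : augment N n 0 = N - ∑ i, n i := if_pos rfl

theorem update_zero_augment {N : ℕ} {n : Fin d → ℕ} (hn0 : n 0 = 0) :
    update (augment N n) 0 0 = n := by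
  funext j
  by_cases hj : j = 0
  · simp [hj, hn0]
  · simp [augment, hj]

theorem augment_update_zero {N : ℕ} {z : Fin d → ℕ} (hz : ∑ i, z i = N) :
    augment N (update z 0 0) = z := by
  have := sum_eq_apply_zero_add_sum_update_zero z
  funext j
  by_cases hj : j = 0
  · rw [hj, augment_apply_zero]; omega
  · simp [augment, hj]

theorem sum_augment {N : ℕ} {n : Fin d → ℕ} (hn0 : n 0 = 0) (hnN : ∑ i, n i ≤ N) :
    ∑ i, augment N n i = N := by
  have := sum_eq_apply_zero_add_sum_update_zero (augment N n)
  rw [update_zero_augment hn0, augment_apply_zero] at this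
  omega

theorem sum_range_sum_filter_antidiagonalTuple_eq_sum_piAntidiag {β : Type*} [AddCommMonoid β]
    (N : ℕ) (f : (Fin d → ℕ) → β) :
    ∑ M ∈ range (N + 1), ∑ n ∈ (Nat.antidiagonalTuple d M).filter (fun n => n 0 = 0), f n =
      ∑ z ∈ piAntidiag univ N, f (update z 0 0) := by
  rw [← sum_biUnion]
  · refine sum_nbij' (augment N) (update · 0 0) ?_ ?_ ?_ ?_ ?_
    · simp only [mem_biUnion, mem_range, mem_filter, Nat.mem_antidiagonalTuple, mem_piAntidiag]
      rintro n ⟨M, hM, rfl, hn0⟩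
      exact ⟨sum_augment hn0 (by omega), by simp⟩
    · intro z hz
      have hz : ∑ i, z i = N := (mem_piAntidiag.1 hz).1
      have := sum_eq_apply_zero_add_sum_update_zero z
      simp only [mem_biUnion, mem_range, mem_filter, Nat.mem_antidiagonalTuple]
      exact ⟨_, by omega, rfl, by simp⟩
    · simp only [mem_biUnion, mem_filter]
      rintro n ⟨M, -, -, hn0⟩
      exact update_zero_augment hn0
    · intro z hz
      exact augment_update_zero (mem_piAntidiag.1 hz).1
    · simp only [mem_biUnion, mem_filter]
      rintro n ⟨M, -, -, hn0⟩
      rw [update_zero_augment hn0]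
  · intro M _ M' _ hMM'
    simp only [Function.onFun, disjoint_left, mem_filter, Nat.mem_antidiagonalTuple]
    rintro n ⟨rfl, -⟩ ⟨rfl, -⟩
    exact hMM' rfl

theorem prod_erase_X_mul_C_pow_eq_monomial {S : Type*} [CommSemiring S] (c : Fin d → S)
    (k : Fin d → ℕ) :
    ∏ l ∈ univ.erase 0, (X l * C (c l)) ^ k l =
      monomial (Finsupp.equivFunOnFinite.symm (update k 0 0)) (∏ l ∈ univ.erase 0, c l ^ k l) := by
  have hX : ∏ l, X l ^ update k 0 0 l =
      ∏ l ∈ univ.erase 0, (X l : MvPolynomial (Fin d) S) ^ k l := by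
    rw [← mul_prod_erase _ _ (mem_univ 0), update_self, pow_zero, one_mul]
    exact prod_congr rfl fun l hl => by rw [update_of_ne (ne_of_mem_erase hl)]
  rw [monomial_eq, Finsupp.prod_fintype _ _ (fun _ => pow_zero _)]
  simp only [Finsupp.equivFunOnFinite_symm_apply_apply, hX, mul_pow, prod_mul_distrib, map_prod,
    map_pow, mul_comm]

theorem coeff_update_zero_one_add_sum_X_mul_C_pow {S : Type*} [CommSemiring S] (c : Fin d → S)
    {N : ℕ} {k : Fin d → ℕ} (hk : ∑ i, k i = N) :
    coeff (Finsupp.equivFunOnFinite.symm (update k 0 0))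
        ((1 + ∑ l ∈ univ.erase 0, X l * C (c l)) ^ N) =
      Nat.multinomial univ k * ∏ l ∈ univ.erase 0, c l ^ k l := by
  have hform : 1 + ∑ l ∈ univ.erase 0, X l * C (c l) =
      ∑ l, if l = 0 then 1 else X l * C (c l) := by
    rw [← add_sum_erase _ _ (mem_univ 0), if_pos rfl]
    exact congrArg _ (sum_congr rfl fun l hl => (if_neg (ne_of_mem_erase hl)).symm)
  have hterm (k' : Fin d → ℕ) : ∏ l, (if l = 0 then 1 else X l * C (c l)) ^ k' l =
      monomial (Finsupp.equivFunOnFinite.symm (update k' 0 0))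
        (∏ l ∈ univ.erase 0, c l ^ k' l) := by
    rw [← mul_prod_erase _ _ (mem_univ 0), if_pos rfl, one_pow, one_mul,
      ← prod_erase_X_mul_C_pow_eq_monomial]
    exact prod_congr rfl fun l hl => by rw [if_neg (ne_of_mem_erase hl)]
  rw [hform, sum_pow_eq_sum_piAntidiag, coeff_sum, sum_eq_single_of_mem k (by simpa using hk)]
  · rw [hterm, ← C_eq_coe_nat, coeff_C_mul, coeff_monomial, if_pos rfl]
  · intro k' hk' hne
    rw [hterm, ← C_eq_coe_nat, coeff_C_mul, coeff_monomial, if_neg, mul_zero]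
    refine fun h => hne ((update_zero_inj ?_).1 (Finsupp.equivFunOnFinite.symm.injective h))
    rw [(mem_piAntidiag.1 hk').1, hk]

noncomputable def krawtchoukFactor (u : Fin d → Fin d → ℝ) (j : Fin d) :
    MvPolynomial (Fin d) ℝ :=
  1 + ∑ l ∈ univ.erase 0, X l * C (u l j)

theorem QK_eq_coeff (u : Fin d → Fin d → ℝ) (n x : Fin d → ℕ) :
    QK d u n x = coeff (Finsupp.equivFunOnFinite.symm n) (∏ j, krawtchoukFactor u j ^ x j) :=
  rfl

variable {u : Fin d → Fin d → ℝ} {p a : Fin d → ℝ}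

/- A polynomial `F(w, z)` in two sets of variables is an element of
`MvPolynomial (Fin d) (MvPolynomial (Fin d) ℝ)`: the outer variables are the `w_l`, the
coefficients are polynomials in the `z_l`. So `P(w) = map C P` and `P(z) = C P`. -/
theorem sum_C_C_mul_krawtchoukFactor_mul_krawtchoukFactor (hu0 : ∀ j, u 0 j = 1)
    (hpsum : ∑ j, p j = 1)
    (horth : ∀ l m, ∑ i, u l i * u m i * p i = if l = m then a l else 0) :
    ∑ j, C (C (p j)) * (map C (krawtchoukFactor u j) * C (krawtchoukFactor u j)) =
      (1 + ∑ l ∈ univ.erase 0, X l * C (X l * C (a l)) :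
        MvPolynomial (Fin d) (MvPolynomial (Fin d) ℝ)) := by
  have ha0 : a 0 = 1 := by simpa [hu0, hpsum] using (horth 0 0).symm
  let v : Fin d → MvPolynomial (Fin d) ℝ := fun l => if l = 0 then 1 else X l
  have hfactor (j : Fin d) : krawtchoukFactor u j = ∑ l, C (u l j) * v l := by
    rw [krawtchoukFactor, ← add_sum_erase _ _ (mem_univ 0)]
    simp only [v, hu0, if_pos rfl, map_one, one_mul]
    exact congrArg _ (sum_congr rfl fun l hl => by rw [if_neg (ne_of_mem_erase hl), mul_comm])
  have hexpand := sum_map_mul_sum_mul_sum_eq_of_orthogonal (C.comp C) horth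
    (fun l => map C (v l)) (fun l => C (v l))
  simp only [RingHom.comp_apply] at hexpand
  simp only [hfactor, map_sum, map_mul, map_C, hexpand]
  rw [← add_sum_erase _ _ (mem_univ 0)]
  simp only [v, if_pos rfl, ha0, map_one, mul_one]
  refine congrArg _ (sum_congr rfl fun l hl => ?_)
  simp only [if_neg (ne_of_mem_erase hl), map_X]
  ring

theorem sum_multinomialPMF_mul_QK_mul_QK (hu0 : ∀ j, u 0 j = 1) (hpsum : ∑ j, p j = 1)
    (horth : ∀ l m, ∑ i, u l i * u m i * p i = if l = m then a l else 0)
    {N : ℕ} {k k' : Fin d → ℕ} (hk : ∑ i, k i = N) (hk' : ∑ i, k' i = N) :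
    ∑ x ∈ piAntidiag univ N,
        multinomialPMF d p x * QK d u (update k 0 0) x * QK d u (update k' 0 0) x =
      if k = k' then Nat.multinomial univ k * ∏ l ∈ univ.erase 0, a l ^ k l else 0 := by
  set e := (Finsupp.equivFunOnFinite (α := Fin d) (M := ℕ)).symm
  let F : Fin d → MvPolynomial (Fin d) (MvPolynomial (Fin d) ℝ) := fun j =>
    map C (krawtchoukFactor u j) * C (krawtchoukFactor u j)
  calc ∑ x ∈ piAntidiag univ N,
        multinomialPMF d p x * QK d u (update k 0 0) x * QK d u (update k' 0 0) x
      = coeff (e (update k' 0 0)) (coeff (e (update k 0 0)) ((∑ j, C (C (p j)) * F j) ^ N)) := by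
        rw [sum_pow_eq_sum_piAntidiag, coeff_sum, coeff_sum]
        refine sum_congr rfl fun x _ => ?_
        have hterm : (Nat.multinomial univ x : MvPolynomial (Fin d) (MvPolynomial (Fin d) ℝ)) *
            ∏ j, (C (C (p j)) * F j) ^ x j = C (C (multinomialPMF d p x)) *
              (map C (∏ j, krawtchoukFactor u j ^ x j) * C (∏ j, krawtchoukFactor u j ^ x j)) := by
          simp only [F, multinomialPMF, mul_pow, prod_mul_distrib, map_prod, map_pow, map_mul,
            map_natCast]
          ring
        rw [hterm, coeff_C_mul, coeff_C_mul, coeff_coeff_map_C_mul_C, QK_eq_coeff, QK_eq_coeff]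
        ring
    _ = coeff (e (update k' 0 0))
          (coeff (e (update k 0 0)) ((1 + ∑ l ∈ univ.erase 0, X l * C (X l * C (a l))) ^ N)) := by
        rw [sum_C_C_mul_krawtchoukFactor_mul_krawtchoukFactor hu0 hpsum horth]
    _ = if k = k' then Nat.multinomial univ k * ∏ l ∈ univ.erase 0, a l ^ k l else 0 := by
        rw [coeff_update_zero_one_add_sum_X_mul_C_pow _ hk, prod_erase_X_mul_C_pow_eq_monomial,
          ← C_eq_coe_nat, coeff_C_mul, coeff_monomial]
        simp only [e, EmbeddingLike.apply_eq_iff_eq, update_zero_inj (hk.trans hk'.symm), mul_ite,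
          mul_zero]

end MultivariateKrawtchouk

open MultivariateKrawtchouk in
theorem multivariate_krawtchouk_dual_orthogonality_general
    (d N : ℕ) [NeZero d]
    (p : Fin d → ℝ) (hp : ∀ j, 0 < p j) (hpsum : ∑ j, p j = 1)
    (u : Fin d → Fin d → ℝ) (hu0 : ∀ j, u 0 j = 1)
    (a : Fin d → ℝ) (ha : ∀ l, 0 < a l)
    (horth : ∀ l m, ∑ i, u l i * u m i * p i = if l = m then a l else 0)
    (x y : Fin d → ℕ) (hx : ∑ j, x j = N) (hy : ∑ j, y j = N) :
    ∑ M ∈ Finset.range (N + 1),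
        ∑ n ∈ (Finset.Nat.antidiagonalTuple d M).filter (fun n => n 0 = 0),
          ((Nat.multinomial Finset.univ
              (fun j => if j = 0 then N - ∑ i, n i else n j) : ℝ))⁻¹ *
            (∏ j ∈ Finset.univ.erase 0, a j ^ n j)⁻¹ * QK d u n x * QK d u n y =
      if x = y then (multinomialPMF d p x)⁻¹ else 0 := by
  have hsum {z : Fin d → ℕ} (hz : z ∈ piAntidiag univ N) : ∑ i, z i = N := (mem_piAntidiag.1 hz).1
  rw [sum_range_sum_filter_antidiagonalTuple_eq_sum_piAntidiag]
  calc _ = ∑ z ∈ piAntidiag univ N, (Nat.multinomial univ z * ∏ l ∈ univ.erase 0, a l ^ z l)⁻¹ *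
        QK d u (update z 0 0) x * QK d u (update z 0 0) y := by
        refine sum_congr rfl fun z hz => ?_
        rw [show (fun j => if j = 0 then N - ∑ i, update z 0 0 i else update z 0 0 j) = z from
            augment_update_zero (hsum hz), mul_inv,
          prod_congr rfl fun l hl => by rw [update_of_ne (ne_of_mem_erase hl)]]
    _ = _ := by
      refine sum_inv_mul_mul_eq_of_sum_mul_mul_eq _ _ _ _ (fun z _ => ?_) (fun z _ => ?_)
        (fun z hz z' hz' => sum_multinomialPMF_mul_QK_mul_QK hu0 hpsum horth (hsum hz) (hsum hz'))
        (by simpa using hx) (by simpa using hy)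
      · exact (mul_pos (by exact_mod_cast Nat.multinomial_pos _ _)
          (prod_pos fun j _ => pow_pos (hp j) _)).ne'
      · exact (mul_pos (by exact_mod_cast Nat.multinomial_pos _ _)
          (prod_pos fun l _ => pow_pos (ha l) _)).ne'

/-- Dual orthogonality of the multivariate Krawtchouk polynomials:
`∑_{n : |n| ≤ N} multinomial(N;n⁺)⁻¹ ∏ a_j^{-n_j} Q_n(x;u) Q_n(y;u) = δ_{xy} m(x;p)⁻¹`. -/
theorem multivariate_krawtchouk_dual_orthogonality
    (d N : ℕ) [NeZero d] (hd : 2 ≤ d)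
    (p : Fin d → ℝ) (hp : ∀ j, 0 < p j) (hpsum : ∑ j, p j = 1)
    (u : Fin d → Fin d → ℝ) (hu0 : ∀ j, u 0 j = 1)
    (a : Fin d → ℝ) (ha : ∀ l, 0 < a l)
    (horth : ∀ l m, ∑ i, u l i * u m i * p i = if l = m then a l else 0)
    (x y : Fin d → ℕ) (hx : ∑ j, x j = N) (hy : ∑ j, y j = N) :
    ∑ M ∈ Finset.range (N + 1),
        ∑ n ∈ (Finset.Nat.antidiagonalTuple d M).filter (fun n => n 0 = 0),
          ((Nat.multinomial Finset.univ
              (fun j => if j = 0 then N - ∑ i, n i else n j) : ℝ))⁻¹ *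
            (∏ j ∈ Finset.univ.erase 0, a j ^ n j)⁻¹ * QK d u n x * QK d u n y =
      if x = y then (multinomialPMF d p x)⁻¹ else 0 :=
  multivariate_krawtchouk_dual_orthogonality_general d N p hp hpsum u hu0 a ha horth x y hx hy
end

section
/- The dual generating function identity holds: ∑_{x : |x|=N} multinomial(N;n^+)^{-1} multinomial(N;x) v_1^{x_1}⋯v_d^{x_d} Q_n(x;u) = (∑_{j=1}^d v_j)^{n_0} ∏_{i=1}^{d-1} (∑_{j=1}^d v_j u_j^{(i)})^{n_i}, where n_0 = N - |n|. -/
open MvPolynomial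

/-!
Both sides are, up to the factor `multinomial(N;n⁺)`, the coefficient of `w^n` in
`P^N`, where `P = ∑_j v_j (1 + ∑_l w_l u_j^{(l)})`. Expanding `P^N` by the multinomial theorem
over `j` gives the left side. Regrouped as `P = ∑_j v_j + ∑_l w_l (∑_j v_j u_j^{(l)})`, `P` is a
linear form in `(1, w_1, …, w_{d-1})`, and expanding over `l` instead, only the exponent `n⁺`
contributes.
-/

open Finset Function

theorem update_eq_iff_eq_update_of_sum_eq {ι : Type*} [Fintype ι] [DecidableEq ι] {i : ι}
    {N : ℕ} {y n : ι → ℕ} (hy : ∑ j, y j = N) (hni : n i = 0) :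
    update y i 0 = n ↔ y = update n i (N - ∑ j, n j) := by
  constructor
  · rintro rfl
    have hsum := sum_update_of_mem (mem_univ i) y 0
    have hy_split := add_sum_erase univ y (mem_univ i)
    rw [sdiff_singleton_eq_erase] at hsum
    rw [update_idem]
    conv_lhs => rw [← update_eq_self i y]
    congr 1
    omega
  · rintro rfl
    rw [update_idem, update_eq_self_iff, hni]

section

variable {R : Type*} [CommSemiring R]

theorem MvPolynomial.coeff_pow_sum_C_mul {σ : Type*} {k : ℕ} (v : Fin k → R)
    (p : Fin k → MvPolynomial σ R) (m : σ →₀ ℕ) (N : ℕ) :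
    coeff m ((∑ j, C (v j) * p j) ^ N) =
      ∑ x ∈ Nat.antidiagonalTuple k N,
        Nat.multinomial univ x * (∏ j, v j ^ x j) * coeff m (∏ j, p j ^ x j) := by
  rw [sum_pow_eq_sum_piAntidiag, piAntidiag_univ_fin_eq_antidiagonalTuple, coeff_sum]
  refine sum_congr rfl fun x _ => ?_
  rw [← C_eq_coe_nat, prod_congr rfl fun j _ => mul_pow _ _ _, prod_mul_distrib,
    ← mul_assoc]
  simp only [← map_pow, ← map_prod, ← C_mul, coeff_C_mul]

variable {d : ℕ} [NeZero d]

variable (R d) in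
/-- The variables `w` of the paper, with `w₀ = 1`. -/
noncomputable def affineX : Fin d → MvPolynomial (Fin d) R := update X 0 1

theorem prod_affineX_pow (y : Fin d → ℕ) :
    ∏ l, affineX R d l ^ y l = monomial (Finsupp.equivFunOnFinite.symm (update y 0 0)) 1 := by
  rw [monomial_eq, C_1, one_mul, Finsupp.prod_fintype _ _ fun _ => pow_zero _]
  refine prod_congr rfl fun l _ => ?_
  rcases eq_or_ne l 0 with rfl | hl
  · simp [affineX]
  · simp [affineX, hl]

theorem prod_C_mul_affineX_pow (c : Fin d → R) (y : Fin d → ℕ) :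
    ∏ l, (C (c l) * affineX R d l) ^ y l =
      monomial (Finsupp.equivFunOnFinite.symm (update y 0 0)) (∏ l, c l ^ y l) := by
  simp only [mul_pow, prod_mul_distrib, prod_affineX_pow, ← map_pow, ← map_prod, C_mul_monomial,
    mul_one]

theorem coeff_sum_C_mul_affineX_pow (c : Fin d → R) {N : ℕ} {n : Fin d → ℕ} (hn0 : n 0 = 0)
    (hn : ∑ j, n j ≤ N) :
    coeff (Finsupp.equivFunOnFinite.symm n) ((∑ l, C (c l) * affineX R d l) ^ N) =
      Nat.multinomial univ (update n 0 (N - ∑ j, n j)) *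
        ∏ l, c l ^ update n 0 (N - ∑ j, n j) l := by
  set nplus := update n 0 (N - ∑ j, n j)
  have hmem : nplus ∈ Nat.antidiagonalTuple d N := by
    have hn_split := add_sum_erase univ n (mem_univ 0)
    rw [Nat.mem_antidiagonalTuple, sum_update_of_mem (mem_univ 0), sdiff_singleton_eq_erase]
    omega
  have hterm : ∀ y ∈ Nat.antidiagonalTuple d N,
      coeff (Finsupp.equivFunOnFinite.symm n)
          ((Nat.multinomial univ y : MvPolynomial (Fin d) R) *
            ∏ l, (C (c l) * affineX R d l) ^ y l) =
        if y = nplus then Nat.multinomial univ y * ∏ l, c l ^ y l else 0 := by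
    intro y hy
    rw [← C_eq_coe_nat, coeff_C_mul, prod_C_mul_affineX_pow, coeff_monomial, mul_ite, mul_zero]
    simp only [Equiv.apply_eq_iff_eq,
      update_eq_iff_eq_update_of_sum_eq (Nat.mem_antidiagonalTuple.mp hy) hn0, nplus]
  rw [sum_pow_eq_sum_piAntidiag, piAntidiag_univ_fin_eq_antidiagonalTuple, coeff_sum,
    sum_congr rfl hterm, sum_ite_eq', if_pos hmem]

theorem sum_C_mul_one_add_sum_X_mul_C (u : Fin d → Fin d → R) (v : Fin d → R) :
    ∑ j, C (v j) * (1 + ∑ l ∈ univ.erase 0, X l * C (u l j)) =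
      ∑ l, C (∑ j, v j * update u 0 1 l j) * affineX R d l := by
  have hterm (j : Fin d) :
      1 + ∑ l ∈ univ.erase 0, X l * C (u l j) = ∑ l, C (update u 0 1 l j) * affineX R d l := by
    rw [← add_sum_erase univ _ (mem_univ 0)]
    refine congrArg₂ (· + ·) (by simp [affineX]) (sum_congr rfl fun l hl => ?_)
    simp [affineX, ne_of_mem_erase hl, mul_comm]
  simp only [hterm, mul_sum, map_sum, sum_mul, map_mul, mul_assoc]
  exact sum_comm

end

theorem multivariate_krawtchouk_dual_gf_general
    (d N : ℕ) [NeZero d]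
    (u : Fin d → Fin d → ℝ)
    (n : Fin d → ℕ) (hn0 : n 0 = 0) (hn : ∑ j, n j ≤ N)
    (v : Fin d → ℝ) :
    ∑ x ∈ Finset.Nat.antidiagonalTuple d N,
        ((Nat.multinomial Finset.univ
            (fun j => if j = 0 then N - ∑ i, n i else n j) : ℝ))⁻¹ *
          (Nat.multinomial Finset.univ x : ℝ) * (∏ j, v j ^ x j) * QK d u n x =
      (∑ j, v j) ^ (N - ∑ i, n i) *
        ∏ i ∈ Finset.univ.erase 0, (∑ j, v j * u i j) ^ n i := by
  set nplus := update n 0 (N - ∑ j, n j)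
  have hnplus : (fun j => if j = 0 then N - ∑ i, n i else n j) = nplus := by
    funext j
    simp only [nplus, update_apply]
  have hM : (Nat.multinomial univ nplus : ℝ) ≠ 0 := by
    exact_mod_cast (Nat.multinomial_pos _ _).ne'
  calc _ = (Nat.multinomial univ nplus : ℝ)⁻¹ *
        coeff (Finsupp.equivFunOnFinite.symm n)
          ((∑ j, C (v j) * (1 + ∑ l ∈ univ.erase 0, X l * C (u l j))) ^ N) := by
        simp only [coeff_pow_sum_C_mul, QK, mul_sum, hnplus, mul_assoc]
    _ = ∏ l, (∑ j, v j * update u 0 1 l j) ^ nplus l := by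
        rw [sum_C_mul_one_add_sum_X_mul_C, coeff_sum_C_mul_affineX_pow _ hn0 hn,
          inv_mul_cancel_left₀ hM]
    _ = _ := by
        rw [← mul_prod_erase univ _ (mem_univ 0)]
        refine congrArg₂ (· * ·) (by simp [nplus]) (prod_congr rfl fun l hl => ?_)
        simp [nplus, ne_of_mem_erase hl]

/-- Dual generating function:
`∑_{|x|=N} multinomial(N;n⁺)⁻¹ multinomial(N;x) v₁^{x₁}⋯v_d^{x_d} Q_n(x;u)
  = (∑_j v_j)^{n₀} ∏_{i≠0} (∑_j v_j u_j^{(i)})^{n_i}` with `n₀ = N - |n|`. -/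
theorem multivariate_krawtchouk_dual_gf
    (d N : ℕ) [NeZero d] (hd : 2 ≤ d)
    (u : Fin d → Fin d → ℝ)
    (n : Fin d → ℕ) (hn0 : n 0 = 0) (hn : ∑ j, n j ≤ N)
    (v : Fin d → ℝ) :
    ∑ x ∈ Finset.Nat.antidiagonalTuple d N,
        ((Nat.multinomial Finset.univ
            (fun j => if j = 0 then N - ∑ i, n i else n j) : ℝ))⁻¹ *
          (Nat.multinomial Finset.univ x : ℝ) * (∏ j, v j ^ x j) * QK d u n x =
      (∑ j, v j) ^ (N - ∑ i, n i) *
        ∏ i ∈ Finset.univ.erase 0, (∑ j, v j * u i j) ^ n i :=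
  multivariate_krawtchouk_dual_gf_general d N u n hn0 hn v
end

section
/- The transform of the multivariate Krawtchouk polynomial against the multinomial distribution satisfies E[∏_{j=1}^d φ_j^{X_j} Q_n(X;u)] = binomial(N,|n|) multinomial(|n|;n) T_0(φ)^{N-|n|} ∏_{i=1}^{d-1} T_i(φ)^{n_i}, where T_i(φ) = ∑_{j=1}^d p_j φ_j u_j^{(i)} and X has the multinomial(N,p) distribution. -/
open MvPolynomial

section Helpers
open Finset

lemma prodXpow (d : ℕ) (S : Finset (Fin d)) (k : Fin d → ℕ) :
    (∏ l ∈ S, (X l : MvPolynomial (Fin d) ℝ) ^ k l) =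
      monomial (∑ l ∈ S, Finsupp.single l (k l)) 1 := by
  induction S using Finset.cons_induction with
  | empty => simp
  | cons a S ha ih =>
      rw [Finset.prod_cons, Finset.sum_cons, ih, X_pow_eq_monomial, monomial_mul, one_mul]

lemma coeff_affine_pow (d N : ℕ) [NeZero d] (T : Fin d → ℝ)
    (n : Fin d → ℕ) (hn0 : n 0 = 0) (hn : ∑ j, n j ≤ N) :
    coeff (Finsupp.equivFunOnFinite.symm n)
      ((C (T 0) + ∑ l ∈ Finset.univ.erase 0, C (T l) * X l) ^ N) =
    (N.choose (∑ i, n i) : ℝ) * (Nat.multinomial Finset.univ n : ℝ) *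
      T 0 ^ (N - ∑ i, n i) * ∏ i ∈ Finset.univ.erase 0, T i ^ n i := by
  classical
  set S : Finset (Fin d) := Finset.univ.erase 0 with hSdef
  have h0S : (0 : Fin d) ∉ S := Finset.notMem_erase _ _
  have hins : insert (0 : Fin d) S = Finset.univ := Finset.insert_erase (Finset.mem_univ _)
  set s : ℕ := ∑ i, n i with hs
  have hsS : ∑ l ∈ S, n l = s := by
    rw [hs, ← hins, Finset.sum_insert h0S, hn0, zero_add]
  set n' : Fin d →₀ ℕ := Finsupp.equivFunOnFinite.symm n with hn'
  have hF : (C (T 0) + ∑ l ∈ S, C (T l) * X l : MvPolynomial (Fin d) ℝ)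
      = ∑ l ∈ Finset.univ, (C (T l) * if l = 0 then 1 else X l) := by
    rw [← hins, Finset.sum_insert h0S, if_pos rfl, mul_one]
    congr 1
    exact Finset.sum_congr rfl fun l hl => by
      rw [if_neg (Finset.ne_of_mem_erase hl)]
  rw [hF, Finset.sum_pow_eq_sum_piAntidiag, coeff_sum]
  set k₀ : Fin d → ℕ := fun l => if l = 0 then N - s else n l with hk₀
  have hk₀S : ∀ l ∈ S, k₀ l = n l := fun l hl => by
    simp [hk₀, Finset.ne_of_mem_erase hl]
  have hk₀sum : ∑ l, k₀ l = N := by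
    rw [← hins, Finset.sum_insert h0S, Finset.sum_congr rfl hk₀S, hsS]
    simp [hk₀]; omega
  have hk₀mem : k₀ ∈ Finset.piAntidiag Finset.univ N := by
    rw [Finset.mem_piAntidiag]
    exact ⟨hk₀sum, fun i _ => Finset.mem_univ i⟩
  -- rewrite each term
  have hterm : ∀ k : Fin d → ℕ,
      coeff n' ((Nat.multinomial Finset.univ k : MvPolynomial (Fin d) ℝ) *
        ∏ l, (C (T l) * if l = 0 then 1 else X l) ^ k l)
      = (Nat.multinomial Finset.univ k : ℝ) * (∏ l, T l ^ k l) *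
          (if (∑ l ∈ S, Finsupp.single l (k l)) = n' then 1 else 0) := by
    intro k
    have : (∏ l, (C (T l) * if l = 0 then 1 else X l) ^ k l : MvPolynomial (Fin d) ℝ)
        = C (∏ l, T l ^ k l) * ∏ l ∈ S, X l ^ k l := by
      simp_rw [mul_pow, Finset.prod_mul_distrib, ← C_pow, ← map_prod]
      congr 1
      rw [← hins, Finset.prod_insert h0S, if_pos rfl, one_pow, one_mul]
      exact Finset.prod_congr rfl fun l hl => by
        rw [if_neg (Finset.ne_of_mem_erase hl)]
    rw [this, ← C_eq_coe_nat, ← mul_assoc, ← C_mul, coeff_C_mul, prodXpow,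
      coeff_monomial, mul_assoc]
  simp_rw [hterm]
  rw [Finset.sum_eq_single_of_mem k₀ hk₀mem]
  · -- main term
    have hm : (∑ l ∈ S, Finsupp.single l (k₀ l)) = n' := by
      ext i
      rw [Finsupp.finset_sum_apply]
      simp_rw [Finsupp.single_apply]
      rw [Finset.sum_ite_eq' S i k₀]
      by_cases hi : i ∈ S
      · rw [if_pos hi, hk₀S i hi]; rfl
      · rw [if_neg hi]
        have : i = 0 := by
          by_contra h
          exact hi (Finset.mem_erase.mpr ⟨h, Finset.mem_univ i⟩)
        simp [this, hn', hn0]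
    rw [if_pos hm, mul_one]
    have h1 : ∑ l ∈ S, k₀ l = s := by rw [Finset.sum_congr rfl hk₀S, hsS]
    have h2 : Nat.multinomial S k₀ = Nat.multinomial S n :=
      Nat.multinomial_congr hk₀S
    have hk00 : k₀ 0 = N - s := by simp [hk₀]
    have hmult : Nat.multinomial Finset.univ k₀ = N.choose s * Nat.multinomial Finset.univ n := by
      rw [← hins, Nat.multinomial_insert h0S, Nat.multinomial_insert h0S, hn0,
        Nat.choose_zero_right, one_mul, h1, h2, hk00,
        Nat.sub_add_cancel hn, Nat.choose_symm hn]
    have hprod : (∏ l, T l ^ k₀ l) = T 0 ^ (N - s) * ∏ i ∈ S, T i ^ n i := by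
      rw [← hins, Finset.prod_insert h0S, Finset.prod_congr rfl
        (fun l hl => by rw [hk₀S l hl] : ∀ l ∈ S, T l ^ k₀ l = T l ^ n l), hk00]
    rw [hmult, hprod]
    push_cast
    ring
  · intro k hk hne
    have : ¬ (∑ l ∈ S, Finsupp.single l (k l)) = n' := by
      intro heq
      apply hne
      rw [Finset.mem_piAntidiag] at hk
      have hkS : ∀ l ∈ S, k l = n l := by
        intro l hl
        have := congrArg (fun f => f l) heq
        simp only [Finsupp.finset_sum_apply] at this
        simp_rw [Finsupp.single_apply] at this
        rw [Finset.sum_ite_eq' S l k, if_pos hl] at this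
        exact this
      have hk0 : k 0 = N - s := by
        have := hk.1
        rw [← hins, Finset.sum_insert h0S, Finset.sum_congr rfl hkS, hsS] at this
        omega
      funext l
      by_cases hl : l ∈ S
      · rw [hkS l hl, hk₀S l hl]
      · have : l = 0 := by
          by_contra h
          exact hl (Finset.mem_erase.mpr ⟨h, Finset.mem_univ l⟩)
        subst this
        rw [hk0]; simp [hk₀]
    rw [if_neg this, mul_zero]

end Helpers

/-- Transform of the multivariate Krawtchouk polynomial against the multinomial
distribution:
`E[∏_j φ_j^{X_j} Q_n(X;u)] = C(N,|n|) multinomial(|n|;n) T₀(φ)^{N-|n|} ∏_i T_i(φ)^{n_i}`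
with `T_i(φ) = ∑_j p_j φ_j u_j^{(i)}`. -/
theorem multivariate_krawtchouk_transform
    (d N : ℕ) [NeZero d] (hd : 2 ≤ d)
    (p : Fin d → ℝ) (hp : ∀ j, 0 < p j) (hpsum : ∑ j, p j = 1)
    (u : Fin d → Fin d → ℝ) (hu0 : ∀ j, u 0 j = 1)
    (n : Fin d → ℕ) (hn0 : n 0 = 0) (hn : ∑ j, n j ≤ N)
    (φ : Fin d → ℝ) :
    ∑ x ∈ Finset.Nat.antidiagonalTuple d N,
        multinomialPMF d p x * (∏ j, φ j ^ x j) * QK d u n x =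
      (N.choose (∑ i, n i) : ℝ) * (Nat.multinomial Finset.univ n : ℝ) *
        (∑ j, p j * φ j * u 0 j) ^ (N - ∑ i, n i) *
        ∏ i ∈ Finset.univ.erase 0, (∑ j, p j * φ j * u i j) ^ n i := by
  classical
  have hF : (∑ j, C (p j * φ j) *
        (1 + ∑ l ∈ Finset.univ.erase 0, X l * C (u l j)) : MvPolynomial (Fin d) ℝ)
      = C ((fun l => ∑ j, p j * φ j * u l j) 0) +
        ∑ l ∈ Finset.univ.erase 0, C ((fun l => ∑ j, p j * φ j * u l j) l) * X l := by
    simp only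
    simp_rw [mul_add, mul_one, Finset.sum_add_distrib, Finset.mul_sum]
    rw [Finset.sum_comm]
    congr 1
    · rw [map_sum]
      exact Finset.sum_congr rfl fun j _ => by rw [hu0 j, mul_one]
    · refine Finset.sum_congr rfl fun l _ => ?_
      rw [map_sum, Finset.sum_mul]
      refine Finset.sum_congr rfl fun j _ => ?_
      conv_rhs => rw [C_mul]
      ring
  have key : ∑ x ∈ Finset.Nat.antidiagonalTuple d N,
      multinomialPMF d p x * (∏ j, φ j ^ x j) * QK d u n x
      = coeff (Finsupp.equivFunOnFinite.symm n)
        ((∑ j, C (p j * φ j) *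
          (1 + ∑ l ∈ Finset.univ.erase 0, X l * C (u l j))) ^ N) := by
    rw [Finset.sum_pow_eq_sum_piAntidiag, coeff_sum,
      ← Finset.piAntidiag_univ_fin_eq_antidiagonalTuple N d]
    refine Finset.sum_congr rfl fun k hk => ?_
    unfold multinomialPMF QK
    rw [← C_eq_coe_nat]
    simp_rw [mul_pow, Finset.prod_mul_distrib, ← C_pow, ← map_prod]
    rw [← mul_assoc, ← C_mul, coeff_C_mul]
    simp_rw [mul_pow, Finset.prod_mul_distrib]
    ring
  rw [key, hF]
  exact coeff_affine_pow d N (fun l => ∑ j, p j * φ j * u l j) n hn0 hn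
end

section
/- With u orthonormal on p, the recurrence u_i(x) Q_n(x;u) = (n_i+1) Q_{n+e_i}(x;u) + (N-|n|+1) Q_{n-e_i}(x;u) + ∑_{l,k=1}^{d-1} c(i,l,k)(n_k + 1 - δ_{kl}) Q_{n-e_l+e_k}(x;u) holds for all x with |x| = N, where u_i(x) = ∑_{j=1}^d u_j^{(i)} x_j and c(i,l,k) = ∑_{j=1}^d u_j^{(i)} u_j^{(l)} u_j^{(k)} p_j. -/
open MvPolynomial

/-- `Q_n(x;u)` for an integer multi-index, with the convention that it vanishes when
some entry of `n` is negative. -/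
noncomputable def QKZ (d : ℕ) [NeZero d] (u : Fin d → Fin d → ℝ) (n : Fin d → ℤ)
    (x : Fin d → ℕ) : ℝ :=
  if ∀ i, 0 ≤ n i then QK d u (fun i => (n i).toNat) x else 0

/-!
Let `G(w) = ∏_j F_j(w)^{x_j}` with `F_j = 1 + ∑_{l ≥ 1} w_l u_j^{(l)}` be the generating function
of the `Q_n(x;u)`, and let `L` be the first-order operator
`∂_i + ∑_{l,k ≥ 1} c(i,l,k) w_l ∂_k - w_i ∑_l w_l ∂_l`, a derivation of the polynomial ring.
For the square matrix `u`, orthonormality of its rows with weight `p` implies the completeness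
relation `∑_l u_j^{(l)} u_{j'}^{(l)} p_{j'} = δ_{jj'}`, so `u^{(0)}, …, u^{(d-1)}` is a basis and
`u^{(i)} u^{(l)} = ∑_k c(i,l,k) u^{(k)}`. This gives
`L F_j = (u_j^{(i)} - w_i) F_j`, hence `L G = (u_i(x) - N w_i) G`, and the coefficient of `w^n` on
both sides is the recurrence.
-/

namespace Derivation

variable {R A : Type*} [CommSemiring R] [CommSemiring A] [Algebra R A]

theorem sum_apply {M ι : Type*} [AddCommMonoid M] [Module A M] [Module R M] (s : Finset ι)
    (D : ι → Derivation R A M) (a : A) : (∑ l ∈ s, D l) a = ∑ l ∈ s, D l a := by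
  have := congrFun (map_sum coeFnAddMonoidHom D s) a
  rwa [Finset.sum_apply] at this

variable (D : Derivation R A A)

theorem map_pow_of_map_eq_mul {f g : A} (h : D f = g * f) (n : ℕ) :
    D (f ^ n) = n * g * f ^ n := by
  induction n with
  | zero => simp
  | succ n ih =>
    rw [pow_succ, D.leibniz, ih, h, smul_eq_mul, smul_eq_mul]
    push_cast
    ring

theorem map_prod_pow_of_map_eq_mul {ι : Type*} (s : Finset ι) {f g : ι → A}
    (h : ∀ j ∈ s, D (f j) = g j * f j) (x : ι → ℕ) :
    D (∏ j ∈ s, f j ^ x j) = (∑ j ∈ s, x j * g j) * ∏ j ∈ s, f j ^ x j := by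
  classical
  induction s using Finset.induction_on with
  | empty => simp
  | insert a s ha ih =>
    rw [Finset.prod_insert ha, Finset.sum_insert ha, D.leibniz,
      ih fun j hj => h j (Finset.mem_insert_of_mem hj),
      D.map_pow_of_map_eq_mul (h a (Finset.mem_insert_self a s)), smul_eq_mul, smul_eq_mul]
    ring

end Derivation

theorem sum_mul_mul_eq_ite_of_orthonormal {ι R : Type*} [Fintype ι] [DecidableEq ι]
    [CommRing R] {u : ι → ι → R} {p : ι → R}
    (horth : ∀ l m, ∑ j, u l j * u m j * p j = if l = m then 1 else 0) (j j' : ι) :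
    ∑ l, u l j * u l j' * p j' = if j = j' then 1 else 0 := by
  have hrows : Matrix.of (fun l j => u l j * p j) * (Matrix.of u).transpose = 1 := by
    ext l m
    simp only [Matrix.mul_apply, Matrix.transpose_apply, Matrix.of_apply, Matrix.one_apply,
      ← horth, mul_right_comm]
  have hcols : (Matrix.of u).transpose * Matrix.of (fun l j => u l j * p j) = 1 :=
    mul_eq_one_comm.mp hrows
  simpa only [Matrix.mul_apply, Matrix.transpose_apply, Matrix.of_apply, Matrix.one_apply,
    mul_assoc] using congrFun₂ hcols j j'

theorem eq_sum_inner_mul_of_orthonormal {ι R : Type*} [Fintype ι] [DecidableEq ι]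
    [CommRing R] {u : ι → ι → R} {p : ι → R}
    (horth : ∀ l m, ∑ j, u l j * u m j * p j = if l = m then 1 else 0) (v : ι → R) (j : ι) :
    v j = ∑ k, (∑ j', v j' * u k j' * p j') * u k j := by
  calc v j = ∑ j', v j' * if j = j' then 1 else 0 := by simp
    _ = ∑ j', v j' * ∑ k, u k j * u k j' * p j' := by
      simp_rw [sum_mul_mul_eq_ite_of_orthonormal horth]
    _ = ∑ k, (∑ j', v j' * u k j' * p j') * u k j := by
      simp_rw [Finset.mul_sum, Finset.sum_mul]
      rw [Finset.sum_comm]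
      simp only [mul_comm, mul_left_comm]

theorem sum_erase_mul_eq_mul_sub_ite_of_orthonormal {ι R : Type*} [Fintype ι] [DecidableEq ι]
    [CommRing R] {u : ι → ι → R} {p : ι → R} {i₀ : ι} (hu₀ : ∀ j, u i₀ j = 1)
    (horth : ∀ l m, ∑ j, u l j * u m j * p j = if l = m then 1 else 0) (i l j : ι) :
    ∑ k ∈ Finset.univ.erase i₀, (∑ j', u i j' * u l j' * u k j' * p j') * u k j
      = u i j * u l j - if i = l then 1 else 0 := by
  rw [eq_sum_inner_mul_of_orthonormal horth (fun j => u i j * u l j) j,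
    ← Finset.add_sum_erase _ _ (Finset.mem_univ i₀)]
  simp only [hu₀, mul_one, horth]
  ring

namespace MvPolynomial

variable {σ : Type*} [Fintype σ]

section CommSemiring

variable {R : Type*} [CommSemiring R]

noncomputable def coeffInt (m : σ → ℤ) : MvPolynomial σ R →ₗ[R] R :=
  if ∀ i, 0 ≤ m i then lcoeff R (Finsupp.equivFunOnFinite.symm fun i => (m i).toNat) else 0

theorem coeffInt_of_nonneg {m : σ → ℤ} (hm : ∀ i, 0 ≤ m i) (f : MvPolynomial σ R) :
    coeffInt m f = coeff (Finsupp.equivFunOnFinite.symm fun i => (m i).toNat) f := by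
  rw [coeffInt, if_pos hm, lcoeff_apply]

theorem coeffInt_of_neg {m : σ → ℤ} {j : σ} (hj : m j < 0) (f : MvPolynomial σ R) :
    coeffInt m f = 0 := by
  rw [coeffInt, if_neg fun hm => (hm j).not_gt hj, LinearMap.zero_apply]

theorem coeffInt_natCast (n : σ → ℕ) (f : MvPolynomial σ R) :
    coeffInt (fun i => (n i : ℤ)) f = coeff (Finsupp.equivFunOnFinite.symm n) f := by
  simp [coeffInt_of_nonneg]

theorem coeffInt_C_mul (m : σ → ℤ) (a : R) (f : MvPolynomial σ R) :
    coeffInt m (C a * f) = a * coeffInt m f := by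
  rw [C_mul', map_smul, smul_eq_mul]

theorem coeffInt_X_mul [DecidableEq σ] (m : σ → ℤ) (k : σ) (f : MvPolynomial σ R) :
    coeffInt m (X k * f) = coeffInt (m - Pi.single k 1) f := by
  by_cases hm : ∀ i, 0 ≤ m i
  · rw [coeffInt_of_nonneg hm, coeff_X_mul']
    have hmk := hm k
    by_cases hk : m k = 0
    · rw [if_neg (by simp [hk]), coeffInt_of_neg (j := k) (by simp [hk])]
    · have hsub : ∀ i, 0 ≤ (m - Pi.single k 1 : σ → ℤ) i := fun i => by
        have := hm i
        simp only [Pi.sub_apply, Pi.single_apply]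
        split_ifs <;> subst_vars <;> omega
      rw [if_pos (by simp; omega), coeffInt_of_nonneg hsub]
      congr 1
      ext i
      have := hm i
      simp only [Finsupp.tsub_apply, Finsupp.coe_equivFunOnFinite_symm, Pi.sub_apply,
        Pi.single_apply, Finsupp.single_apply]
      rcases eq_or_ne i k with rfl | h
      · simp only [if_true]; omega
      · simp only [h, h.symm, if_false]; omega
  · obtain ⟨j, hj⟩ := not_forall.mp hm
    rw [coeffInt_of_neg (not_le.mp hj), coeffInt_of_neg (j := j)]
    simp only [Pi.sub_apply, Pi.single_apply]
    split_ifs <;> omega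

end CommSemiring

section CommRing

variable {R : Type*} [CommRing R] [DecidableEq σ]

theorem coeffInt_pderiv (m : σ → ℤ) (k : σ) (f : MvPolynomial σ R) :
    coeffInt m (pderiv k f) = ((m k + 1 : ℤ) : R) * coeffInt (m + Pi.single k 1) f := by
  by_cases hm : ∀ i, 0 ≤ m i
  · have hadd : ∀ i, 0 ≤ (m + Pi.single k 1 : σ → ℤ) i := fun i => by
      have := hm i
      simp only [Pi.add_apply, Pi.single_apply]
      split_ifs <;> omega
    rw [coeffInt_of_nonneg hm, coeffInt_of_nonneg hadd, coeff_pderiv, mul_comm]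
    congr 1
    · have := hm k
      rw [Finsupp.coe_equivFunOnFinite_symm, ← Int.cast_natCast, Int.toNat_of_nonneg this,
        Int.cast_add, Int.cast_one]
    · congr 1
      ext i
      have := hm i
      simp only [Finsupp.add_apply, Finsupp.coe_equivFunOnFinite_symm, Pi.add_apply,
        Pi.single_apply, Finsupp.single_apply]
      rcases eq_or_ne i k with rfl | h
      · simp only [if_true]; omega
      · simp only [h, h.symm, if_false]; omega
  · obtain ⟨j, hj⟩ := not_forall.mp hm
    rw [coeffInt_of_neg (not_le.mp hj)]
    by_cases hjk : j = k ∧ m k = -1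
    · rw [hjk.2, neg_add_cancel, Int.cast_zero, zero_mul]
    · rw [coeffInt_of_neg (j := j), mul_zero]
      simp only [Pi.add_apply, Pi.single_apply]
      split_ifs with h
      · subst h; simp only [true_and] at hjk; omega
      · omega

theorem coeffInt_sum_X_mul_pderiv (m : σ → ℤ) (f : MvPolynomial σ R) :
    coeffInt m (∑ l, X l * pderiv l f) = ((∑ l, m l : ℤ) : R) * coeffInt m f := by
  simp [coeffInt_X_mul, coeffInt_pderiv, Finset.sum_mul]

end CommRing

end MvPolynomial

open Finset

section Krawtchouk

variable {d : ℕ} [NeZero d]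

noncomputable def krawtchoukFactor (u : Fin d → Fin d → ℝ) (j : Fin d) : MvPolynomial (Fin d) ℝ :=
  1 + ∑ l ∈ univ.erase 0, X l * C (u l j)

noncomputable def krawtchoukGenFun (u : Fin d → Fin d → ℝ) (x : Fin d → ℕ) :
    MvPolynomial (Fin d) ℝ :=
  ∏ j, krawtchoukFactor u j ^ x j

theorem QKZ_eq_coeffInt (u : Fin d → Fin d → ℝ) (n : Fin d → ℤ) (x : Fin d → ℕ) :
    QKZ d u n x = coeffInt n (krawtchoukGenFun u x) := by
  unfold QKZ coeffInt
  split_ifs <;> rfl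

theorem QK_eq_coeffInt (u : Fin d → Fin d → ℝ) (n x : Fin d → ℕ) :
    QK d u n x = coeffInt (fun i => (n i : ℤ)) (krawtchoukGenFun u x) := by
  rw [coeffInt_natCast]
  rfl

theorem pderiv_krawtchoukFactor (u : Fin d → Fin d → ℝ) (l j : Fin d) :
    pderiv l (krawtchoukFactor u j) = if l = 0 then 0 else C (u l j) := by
  rcases eq_or_ne l 0 with rfl | hl
  · simp [krawtchoukFactor, pderiv_X, Pi.single_apply]
  · simp [krawtchoukFactor, pderiv_X, Pi.single_apply, hl, hl.symm]

theorem sum_X_mul_pderiv_krawtchoukFactor (u : Fin d → Fin d → ℝ) (j : Fin d) :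
    ∑ l, X l * pderiv l (krawtchoukFactor u j) = krawtchoukFactor u j - 1 := by
  rw [← add_sum_erase _ _ (mem_univ 0), pderiv_krawtchoukFactor, if_pos rfl, mul_zero, zero_add,
    sum_congr rfl fun l hl => by rw [pderiv_krawtchoukFactor, if_neg (ne_of_mem_erase hl)],
    krawtchoukFactor, add_sub_cancel_left]

noncomputable def krawtchoukDerivation (p : Fin d → ℝ) (u : Fin d → Fin d → ℝ) (i : Fin d) :
    Derivation ℝ (MvPolynomial (Fin d) ℝ) (MvPolynomial (Fin d) ℝ) :=
  pderiv i + ∑ l ∈ univ.erase 0, ∑ k ∈ univ.erase 0,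
      (C (∑ j, u i j * u l j * u k j * p j) * X l) • pderiv k
    - X (R := ℝ) i • ∑ l, X (R := ℝ) l • pderiv l

theorem krawtchoukDerivation_apply (p : Fin d → ℝ) (u : Fin d → Fin d → ℝ) (i : Fin d)
    (f : MvPolynomial (Fin d) ℝ) :
    krawtchoukDerivation p u i f = pderiv i f + ∑ l ∈ univ.erase 0, ∑ k ∈ univ.erase 0,
      C (∑ j, u i j * u l j * u k j * p j) * X l * pderiv k f
        - X i * ∑ l, X l * pderiv l f := by
  simp only [krawtchoukDerivation, Derivation.add_apply, Derivation.sub_apply,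
    Derivation.sum_apply, Derivation.smul_apply, smul_eq_mul]

variable {p : Fin d → ℝ} {u : Fin d → Fin d → ℝ} {i : Fin d}

theorem krawtchoukDerivation_krawtchoukFactor (hu0 : ∀ j, u 0 j = 1)
    (horth : ∀ l m, ∑ i, u l i * u m i * p i = if l = m then (1 : ℝ) else 0) (hi : i ≠ 0)
    (j : Fin d) :
    krawtchoukDerivation p u i (krawtchoukFactor u j)
      = (C (u i j) - X i) * krawtchoukFactor u j := by
  have hmixed : ∑ l ∈ univ.erase 0, ∑ k ∈ univ.erase 0,
      C (∑ j', u i j' * u l j' * u k j' * p j') * X l * pderiv k (krawtchoukFactor u j)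
        = C (u i j) * (krawtchoukFactor u j - 1) - X i := by
    calc _ = ∑ l ∈ univ.erase 0, X l *
          C (∑ k ∈ univ.erase 0, (∑ j', u i j' * u l j' * u k j' * p j') * u k j) := by
          refine sum_congr rfl fun l _ => ?_
          rw [map_sum, mul_sum]
          refine sum_congr rfl fun k hk => ?_
          rw [pderiv_krawtchoukFactor, if_neg (ne_of_mem_erase hk), map_mul]
          ring
      _ = ∑ l ∈ univ.erase 0, (C (u i j) * (X l * C (u l j)) - if i = l then X l else 0) := by
          refine sum_congr rfl fun l _ => ?_
          rw [sum_erase_mul_eq_mul_sub_ite_of_orthonormal hu0 horth, map_sub, map_mul, apply_ite C,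
            map_one, map_zero]
          split_ifs <;> ring
      _ = C (u i j) * (krawtchoukFactor u j - 1) - X i := by
          rw [sum_sub_distrib, ← mul_sum, sum_ite_eq, if_pos (mem_erase.mpr ⟨hi, mem_univ i⟩),
            krawtchoukFactor, add_sub_cancel_left]
  rw [krawtchoukDerivation_apply, hmixed, sum_X_mul_pderiv_krawtchoukFactor,
    pderiv_krawtchoukFactor, if_neg hi]
  ring

theorem krawtchoukDerivation_krawtchoukGenFun (hu0 : ∀ j, u 0 j = 1)
    (horth : ∀ l m, ∑ i, u l i * u m i * p i = if l = m then (1 : ℝ) else 0) (hi : i ≠ 0)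
    (x : Fin d → ℕ) :
    krawtchoukDerivation p u i (krawtchoukGenFun u x)
      = C (∑ j, u i j * (x j : ℝ)) * krawtchoukGenFun u x
        - (∑ j, x j) • (X i * krawtchoukGenFun u x) := by
  rw [krawtchoukGenFun, Derivation.map_prod_pow_of_map_eq_mul _ _
    (fun j _ => krawtchoukDerivation_krawtchoukFactor hu0 horth hi j)]
  simp only [mul_sub, sum_sub_distrib, sub_mul, map_sum, map_mul, map_natCast, sum_mul,
    nsmul_eq_mul, Nat.cast_sum]
  congr 1 <;> exact sum_congr rfl fun j _ => by ring

theorem coeffInt_krawtchoukDerivation (m : Fin d → ℤ) (f : MvPolynomial (Fin d) ℝ) :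
    coeffInt m (krawtchoukDerivation p u i f)
      = ((m i + 1 : ℤ) : ℝ) * coeffInt (m + Pi.single i 1) f
        + ∑ l ∈ univ.erase 0, ∑ k ∈ univ.erase 0, (∑ j, u i j * u l j * u k j * p j)
            * ((m k + 1 - (Pi.single l 1 : Fin d → ℤ) k : ℤ) : ℝ)
            * coeffInt (m - Pi.single l 1 + Pi.single k 1) f
        - ((∑ l, m l - 1 : ℤ) : ℝ) * coeffInt (m - Pi.single i 1) f := by
  rw [krawtchoukDerivation_apply, map_sub, map_add, coeffInt_X_mul, coeffInt_sum_X_mul_pderiv,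
    coeffInt_pderiv, map_sum]
  congr 2
  · refine sum_congr rfl fun l _ => ?_
    rw [map_sum]
    refine sum_congr rfl fun k _ => ?_
    rw [mul_assoc, coeffInt_C_mul, coeffInt_X_mul, coeffInt_pderiv, mul_assoc, Pi.sub_apply,
      sub_add_eq_add_sub]
  · simp [sum_sub_distrib]

end Krawtchouk

theorem multivariate_krawtchouk_recurrence_general
    (d N : ℕ) [NeZero d]
    (p : Fin d → ℝ)
    (u : Fin d → Fin d → ℝ) (hu0 : ∀ j, u 0 j = 1)
    (horth : ∀ l m, ∑ i, u l i * u m i * p i = if l = m then (1 : ℝ) else 0)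
    (x : Fin d → ℕ) (hx : ∑ j, x j = N)
    (n : Fin d → ℕ)
    (i : Fin d) (hi : i ≠ 0) :
    (∑ j, u i j * (x j : ℝ)) * QK d u n x =
      ((n i : ℝ) + 1) *
          QKZ d u (fun m => (n m : ℤ) + if m = i then 1 else 0) x +
        ((N : ℝ) - (∑ m, n m : ℕ) + 1) *
          QKZ d u (fun m => (n m : ℤ) - if m = i then 1 else 0) x +
        ∑ l ∈ Finset.univ.erase 0, ∑ k ∈ Finset.univ.erase 0,
          (∑ j, u i j * u l j * u k j * p j) *
            ((n k : ℝ) + 1 - if k = l then 1 else 0) *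
            QKZ d u
              (fun m => (n m : ℤ) - (if m = l then 1 else 0) +
                if m = k then 1 else 0) x := by
  have key := congrArg (coeffInt fun a => (n a : ℤ))
    (krawtchoukDerivation_krawtchoukGenFun hu0 horth hi x)
  rw [coeffInt_krawtchoukDerivation, map_sub, coeffInt_C_mul, map_nsmul, coeffInt_X_mul, hx,
    nsmul_eq_mul] at key
  simp only [Pi.single_apply, Pi.add_def, Pi.sub_def] at key
  push_cast at key
  simp only [QK_eq_coeffInt, QKZ_eq_coeffInt]
  push_cast
  linear_combination -key

/-- Recurrence for the multivariate Krawtchouk polynomials (u orthonormal on p):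
`u_i(x) Q_n = (n_i+1) Q_{n+e_i} + (N-|n|+1) Q_{n-e_i}
 + ∑_{l,k} c(i,l,k)(n_k+1-δ_{kl}) Q_{n-e_l+e_k}`. -/
theorem multivariate_krawtchouk_recurrence
    (d N : ℕ) [NeZero d] (hd : 2 ≤ d)
    (p : Fin d → ℝ) (hp : ∀ j, 0 < p j) (hpsum : ∑ j, p j = 1)
    (u : Fin d → Fin d → ℝ) (hu0 : ∀ j, u 0 j = 1)
    (horth : ∀ l m, ∑ i, u l i * u m i * p i = if l = m then (1 : ℝ) else 0)
    (x : Fin d → ℕ) (hx : ∑ j, x j = N)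
    (n : Fin d → ℕ) (hn0 : n 0 = 0) (hn : ∑ i, n i ≤ N)
    (i : Fin d) (hi : i ≠ 0) :
    (∑ j, u i j * (x j : ℝ)) * QK d u n x =
      ((n i : ℝ) + 1) *
          QKZ d u (fun m => (n m : ℤ) + if m = i then 1 else 0) x +
        ((N : ℝ) - (∑ m, n m : ℕ) + 1) *
          QKZ d u (fun m => (n m : ℤ) - if m = i then 1 else 0) x +
        ∑ l ∈ Finset.univ.erase 0, ∑ k ∈ Finset.univ.erase 0,
          (∑ j, u i j * u l j * u k j * p j) *
            ((n k : ℝ) + 1 - if k = l then 1 else 0) *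
            QKZ d u
              (fun m => (n m : ℤ) - (if m = l then 1 else 0) +
                if m = k then 1 else 0) x :=
  multivariate_krawtchouk_recurrence_general d N p u hu0 horth x hx n i hi
end

section
/- If the one-step expansion p_{ij}(t) = p_j(1 + ∑_{k≥1} e^{-tζ_k} u_i^{(k)} u_j^{(k)}) holds with ∑_i u_i^{(k)} u_i^{(l)} p_i = δ_{kl}, then the N-fold product chain on compositions x with |x|=N has transition function p(x,y;t) = m(y;p)(1 + ∑_{0<|n|≤N} e^{-t∑_i n_i ζ_i} multinomial(N;n)^{-1} Q_n(x;u) Q_n(y;u)), where Q_n are the multivariate Krawtchouk polynomials with basis u. (Finite version: d states, finitely many eigenvalues ζ_1,…,ζ_{d-1} > 0.) -/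
open MvPolynomial

/-- One-step transition function `p_{ij}(t) = p_j ∑_k e^{-tζ_k} u_i^{(k)} u_j^{(k)}`. -/
noncomputable def oneStep (d : ℕ) (p : Fin d → ℝ) (u : Fin d → Fin d → ℝ)
    (ζ : Fin d → ℝ) (t : ℝ) (i j : Fin d) : ℝ :=
  p j * ∑ k, Real.exp (-t * ζ k) * u k i * u k j

/-- Transition function of the `N`-fold composition chain: the coefficient of
`∏_j s_j^{y_j}` in `∏_i (∑_j p_{ij}(t) s_j)^{x_i}`. -/
noncomputable def compTrans (d : ℕ) (p : Fin d → ℝ) (u : Fin d → Fin d → ℝ)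
    (ζ : Fin d → ℝ) (t : ℝ) (x y : Fin d → ℕ) : ℝ :=
  MvPolynomial.coeff (Finsupp.equivFunOnFinite.symm y)
    (∏ i, (∑ j, MvPolynomial.C (oneStep d p u ζ t i j) * MvPolynomial.X j) ^ x i)

/-! Writing `T_k(s) = ∑_j p_j u_j^{(k)} s_j`, the spectral form of `p_{ij}(t)` reads
`∑_j p_{ij}(t) s_j = ∑_k e^{-tζ_k} u_i^{(k)} T_k(s)`, so the generating function
`∏_i (∑_j p_{ij}(t) s_j)^{x_i}` is the degree-`N` form
`G(w) = ∏_i (∑_k e^{-tζ_k} u_i^{(k)} w_k)^{x_i}` at `w = T(s)`, and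
`p(x,y;t) = ∑_{|ν| = N} [w^ν] G · [s^y] ∏_k T_k^{ν_k}`.

`[w^ν] G` is `e^{-t ∑ ν_k ζ_k}` times `[w^ν] ∏_i (∑_k u_i^{(k)} w_k)^{x_i}`, which is `Q_n(x;u)`
for `n = (0, ν_1, …, ν_{d-1})`: as `u^{(0)} ≡ 1`, setting `w_0 = 1` dehomogenizes.
`[s^y] ∏_k T_k^{ν_k}` is `p^y` times `[s^y] ∏_k (∑_j u_j^{(k)} s_j)^{ν_k}`; expanding this and
`[w^ν] ∏_j (∑_k u_j^{(k)} w_k)^{y_j}` over the contingency tables with margins `ν` and `y` shows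
that `multinomial(ν)` times the former is `multinomial(y)` times the latter,
`multinomial(y) Q_n(y;u)`. -/

open Finset Matrix

namespace Nat

open scoped Nat

variable {ι σ : Type*} [Fintype ι] [Fintype σ]

theorem prod_factorial_mul_multinomial_mul_prod_multinomial (m : ι → σ → ℕ) :
    (∏ i, ∏ k, (m i k)!) * (multinomial univ (fun i => ∑ k, m i k) * ∏ i, multinomial univ (m i))
      = (∑ i, ∑ k, m i k)! :=
  calc _ = (∏ i, (∏ k, (m i k)!) * multinomial univ (m i)) *
        multinomial univ (fun i => ∑ k, m i k) := by rw [prod_mul_distrib]; ring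
    _ = (∏ i, (∑ k, m i k)!) * multinomial univ (fun i => ∑ k, m i k) := by
        simp only [multinomial_spec]
    _ = _ := multinomial_spec _ _

theorem multinomial_sum_mul_prod_multinomial_comm (m : ι → σ → ℕ) :
    multinomial univ (fun i => ∑ k, m i k) * ∏ i, multinomial univ (m i)
      = multinomial univ (fun k => ∑ i, m i k) * ∏ k, multinomial univ (fun i => m i k) := by
  have h := prod_factorial_mul_multinomial_mul_prod_multinomial fun k i => m i k
  rw [prod_comm, sum_comm, ← prod_factorial_mul_multinomial_mul_prod_multinomial m] at h
  exact Nat.eq_of_mul_eq_mul_left (prod_pos fun i _ => prod_pos fun k _ => factorial_pos _) h.symm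

end Nat

theorem Fintype.sum_eq_add_sum_update_zero {ι M : Type*} [Fintype ι] [DecidableEq ι]
    [AddCommMonoid M] (f : ι → M) (a : ι) :
    ∑ i, f i = f a + ∑ i, Function.update f a 0 i := by
  rw [sum_update_of_mem (mem_univ a), zero_add, sum_eq_add_sum_sdiff_singleton_of_mem (mem_univ a)]

theorem Finset.Nat.sum_antidiagonalTuple_eq_sum_filter_update {M : Type*} [AddCommMonoid M]
    {d : ℕ} [NeZero d] (N : ℕ) (f : (Fin d → ℕ) → M) :
    ∑ ν ∈ antidiagonalTuple d N, f ν
      = ∑ m ∈ Icc 0 N, ∑ n ∈ (antidiagonalTuple d m).filter (fun n => n 0 = 0),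
          f (Function.update n 0 (N - m)) := by
  have hsum (ν : Fin d → ℕ) := Fintype.sum_eq_add_sum_update_zero ν 0
  rw [← sum_fiberwise_of_maps_to (g := fun ν => N - ν 0) (t := Icc 0 N)
    (fun ν _ => mem_Icc.2 ⟨Nat.zero_le _, Nat.sub_le _ _⟩)]
  refine sum_congr rfl fun m hm => ?_
  have hmN := (mem_Icc.1 hm).2
  have hinv {ν : Fin d → ℕ} (hν : ν ∈ {ν ∈ antidiagonalTuple d N | N - ν 0 = m}) :
      Function.update (Function.update ν 0 0) 0 (N - m) = ν := by
    simp only [mem_filter, mem_antidiagonalTuple] at hν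
    rw [Function.update_idem, Function.update_eq_self_iff]
    have := hsum ν
    omega
  refine sum_nbij' (fun ν => Function.update ν 0 0) (fun n => Function.update n 0 (N - m))
    (fun ν hν => ?_) (fun n hn => ?_) (fun ν hν => hinv hν) (fun n hn => ?_)
    (fun ν hν => by rw [hinv hν])
  · simp only [mem_filter, mem_antidiagonalTuple] at hν ⊢
    have := hsum ν
    exact ⟨by omega, by simp⟩
  · simp only [mem_filter, mem_antidiagonalTuple, Function.update_self] at hn ⊢
    have hn0 : Function.update n 0 0 = n := by rw [Function.update_eq_self_iff, hn.2]
    have := hsum (Function.update n 0 (N - m))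
    simp only [Function.update_idem, Function.update_self, hn0] at this
    omega
  · simp only [mem_filter] at hn
    rw [Function.update_idem, Function.update_eq_self_iff, hn.2]

section ContingencyTables

variable {ι σ : Type*} [Fintype ι] [DecidableEq ι] [Fintype σ] [DecidableEq σ]

def contingencyTables (x : ι → ℕ) (y : σ → ℕ) : Finset (ι → σ → ℕ) :=
  (Fintype.piFinset fun i => piAntidiag univ (x i)).filter fun m => ∀ k, ∑ i, m i k = y k

theorem mem_contingencyTables {x : ι → ℕ} {y : σ → ℕ} {m : ι → σ → ℕ} :
    m ∈ contingencyTables x y ↔ (∀ i, ∑ k, m i k = x i) ∧ ∀ k, ∑ i, m i k = y k := by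
  simp [contingencyTables]

end ContingencyTables

namespace MvPolynomial

variable {R ι σ : Type*} [CommSemiring R] [Fintype ι] [Fintype σ]

noncomputable def linearFormProd (A : Matrix ι σ R) (x : ι → ℕ) : MvPolynomial σ R :=
  ∏ i, (∑ k, C (A i k) * X k) ^ x i

theorem isHomogeneous_linearFormProd (A : Matrix ι σ R) (x : ι → ℕ) :
    (linearFormProd A x).IsHomogeneous (∑ i, x i) :=
  IsHomogeneous.prod _ _ _ fun i _ => by
    simpa using (IsHomogeneous.sum _ _ 1 fun k _ => isHomogeneous_C_mul_X (A i k) k).pow (x i)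

theorem aeval_linearFormProd {τ : Type*} [Fintype τ] (A : Matrix ι σ R) (B : Matrix σ τ R)
    (x : ι → ℕ) :
    aeval (fun k => ∑ j, C (B k j) * X j) (linearFormProd A x) = linearFormProd (A * B) x := by
  simp only [linearFormProd, map_prod, map_pow, map_sum, map_mul, aeval_C, aeval_X,
    algebraMap_eq, Finset.mul_sum, Matrix.mul_apply, Finset.sum_mul, ← mul_assoc]
  exact prod_congr rfl fun i _ => by rw [sum_comm]

section Coeff

variable [DecidableEq ι] [DecidableEq σ]

theorem coeff_linearFormProd (A : Matrix ι σ R) (x : ι → ℕ) (y : σ → ℕ) :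
    coeff (Finsupp.equivFunOnFinite.symm y) (linearFormProd A x) =
      ∑ m ∈ contingencyTables x y,
        (∏ i, (Nat.multinomial univ (m i) : R)) * ∏ i, ∏ k, A i k ^ m i k := by
  have hterm (m : ι → σ → ℕ) :
      ∏ i, ((Nat.multinomial univ (m i) : MvPolynomial σ R) * ∏ k, (C (A i k) * X k) ^ m i k)
        = C ((∏ i, (Nat.multinomial univ (m i) : R)) * ∏ i, ∏ k, A i k ^ m i k) *
            ∏ k, X k ^ ∑ i, m i k := by
    simp only [mul_pow, prod_mul_distrib, map_mul, map_prod, map_pow, map_natCast,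
      ← prod_pow_eq_pow_sum]
    rw [prod_comm (f := fun i k => (X k : MvPolynomial σ R) ^ m i k)]
    ring
  rw [linearFormProd]
  simp only [sum_pow_eq_sum_piAntidiag]
  rw [prod_univ_sum]
  simp only [coeff_sum, hterm, coeff_C_mul, coeff_prod_X_pow, contingencyTables, sum_filter]
  refine sum_congr rfl fun m _ => ?_
  rw [mul_ite, mul_one, mul_zero]
  refine if_congr ?_ rfl rfl
  simp [Finsupp.ext_iff, eq_comm]

theorem multinomial_mul_coeff_linearFormProd (A : Matrix ι σ R) (x : ι → ℕ) (y : σ → ℕ) :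
    (Nat.multinomial univ x : R) * coeff (Finsupp.equivFunOnFinite.symm y) (linearFormProd A x)
      = (Nat.multinomial univ y : R) *
          coeff (Finsupp.equivFunOnFinite.symm x) (linearFormProd Aᵀ y) := by
  simp only [coeff_linearFormProd, mul_sum]
  refine sum_equiv (Equiv.piComm _) (fun m => ?_) fun m hm => ?_
  · simp only [mem_contingencyTables, Equiv.piComm_apply, and_comm]
  · obtain ⟨hx, hy⟩ := mem_contingencyTables.1 hm
    obtain rfl : x = fun i => ∑ k, m i k := (_root_.funext hx).symm
    obtain rfl : y = fun k => ∑ i, m i k := (_root_.funext hy).symm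
    simp only [Equiv.piComm_apply, Matrix.transpose_apply, ← mul_assoc, ← Nat.cast_prod,
      ← Nat.cast_mul, Nat.multinomial_sum_mul_prod_multinomial_comm m]
    rw [prod_comm]; rfl

theorem coeff_linearFormProd_mul_diagonal (A : Matrix ι σ R) (e : σ → R) (x : ι → ℕ)
    (y : σ → ℕ) :
    coeff (Finsupp.equivFunOnFinite.symm y) (linearFormProd (A * Matrix.diagonal e) x)
      = (∏ k, e k ^ y k) * coeff (Finsupp.equivFunOnFinite.symm y) (linearFormProd A x) := by
  simp only [coeff_linearFormProd, mul_sum]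
  refine sum_congr rfl fun m hm => ?_
  have hcol : ∏ i, ∏ k, e k ^ m i k = ∏ k, e k ^ y k := by
    rw [prod_comm]
    exact prod_congr rfl fun k _ => by
      rw [prod_pow_eq_pow_sum, (mem_contingencyTables.1 hm).2 k]
  simp only [Matrix.mul_diagonal, mul_pow, prod_mul_distrib, hcol]
  ring

end Coeff

variable {d N : ℕ}

theorem aeval_eq_sum_antidiagonalTuple_of_isHomogeneous {S : Type*} [CommSemiring S] [Algebra R S]
    {F : MvPolynomial (Fin d) R} (hF : F.IsHomogeneous N) (T : Fin d → S) :
    aeval T F = ∑ ν ∈ Finset.Nat.antidiagonalTuple d N,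
      algebraMap R S (coeff (Finsupp.equivFunOnFinite.symm ν) F) * ∏ k, T k ^ ν k := by
  have hsupp : F.support ⊆ (Finset.Nat.antidiagonalTuple d N).map
      Finsupp.equivFunOnFinite.symm.toEmbedding := fun n hn => by
    refine mem_map.2 ⟨n, ?_, by simp⟩
    rw [Finset.Nat.mem_antidiagonalTuple, ← Finsupp.degree_eq_sum]
    by_contra h
    exact mem_support_iff.1 hn (hF.coeff_eq_zero h)
  rw [aeval_eq_eval₂Hom, coe_eval₂Hom, eval₂_eq', sum_subset hsupp fun n _ hn => by
    rw [notMem_support_iff.1 hn, map_zero, zero_mul], sum_map]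
  rfl

theorem coeff_aeval_dehomogenize_of_isHomogeneous [NeZero d] {F : MvPolynomial (Fin d) R}
    (hF : F.IsHomogeneous N) {n : Fin d → ℕ} (hn0 : n 0 = 0) (hn : ∑ i, n i ≤ N) :
    coeff (Finsupp.equivFunOnFinite.symm n) (aeval (fun k => if k = 0 then 1 else X k) F)
      = coeff (Finsupp.equivFunOnFinite.symm (Function.update n 0 (N - ∑ i, n i))) F := by
  have hsum (ν : Fin d → ℕ) := Fintype.sum_eq_add_sum_update_zero ν 0
  have hn0' : Function.update n 0 0 = n := by rw [Function.update_eq_self_iff, hn0]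
  have hfiber (ν) (hν : ν ∈ Finset.Nat.antidiagonalTuple d N) :
      Function.update ν 0 0 = n ↔ ν = Function.update n 0 (N - ∑ i, n i) := by
    rw [Finset.Nat.mem_antidiagonalTuple, hsum] at hν
    constructor
    · rintro rfl
      rw [Function.update_idem, eq_comm, Function.update_eq_self_iff]
      omega
    · rintro rfl
      rw [Function.update_idem, hn0']
  have hν₀ : Function.update n 0 (N - ∑ i, n i) ∈ Finset.Nat.antidiagonalTuple d N := by
    rw [Finset.Nat.mem_antidiagonalTuple, hsum, Function.update_self, Function.update_idem, hn0']
    omega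
  have hmono (ν : Fin d → ℕ) :
      ∏ k, (if k = 0 then 1 else X k : MvPolynomial (Fin d) R) ^ ν k
        = ∏ k, X k ^ Function.update ν 0 0 k :=
    prod_congr rfl fun k _ => by by_cases hk : k = 0 <;> simp [hk]
  simp only [aeval_eq_sum_antidiagonalTuple_of_isHomogeneous hF, coeff_sum, algebraMap_eq,
    coeff_C_mul, hmono, coeff_prod_X_pow]
  rw [← sum_ite_eq_of_mem' _ _ (fun ν => coeff (Finsupp.equivFunOnFinite.symm ν) F) hν₀]
  refine sum_congr rfl fun ν hν => ?_
  rw [mul_ite, mul_one, mul_zero]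
  refine if_congr ?_ rfl rfl
  rw [← hfiber ν hν]
  simp [Finsupp.ext_iff, _root_.funext_iff, eq_comm]

end MvPolynomial

section CompositionChain

variable {d : ℕ}

theorem QK_eq_coeff_linearFormProd [NeZero d] {u : Fin d → Fin d → ℝ} (hu0 : ∀ j, u 0 j = 1)
    {n x : Fin d → ℕ} (hn0 : n 0 = 0) (hn : ∑ i, n i ≤ ∑ j, x j) :
    QK d u n x = coeff (Finsupp.equivFunOnFinite.symm (Function.update n 0 (∑ j, x j - ∑ i, n i)))
      (linearFormProd (of u)ᵀ x) := by
  rw [← coeff_aeval_dehomogenize_of_isHomogeneous (isHomogeneous_linearFormProd _ x) hn0 hn, QK]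
  congr 1
  simp only [linearFormProd, map_prod, map_pow, map_sum, map_mul, aeval_C, aeval_X,
    algebraMap_eq, transpose_apply, of_apply]
  refine prod_congr rfl fun j _ => ?_
  rw [← add_sum_erase _ _ (mem_univ 0), if_pos rfl, hu0, map_one, mul_one]
  exact congr_arg (· ^ x j) <| congr_arg _ <| sum_congr rfl fun k hk => by
    rw [if_neg (ne_of_mem_erase hk), mul_comm]

theorem QK_zero [NeZero d] (u : Fin d → Fin d → ℝ) (x : Fin d → ℕ) : QK d u 0 x = 1 := by
  rw [QK, show Finsupp.equivFunOnFinite.symm (0 : Fin d → ℕ) = 0 by ext; rfl, ← constantCoeff_eq]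
  simp

theorem compTrans_eq_sum_antidiagonalTuple (p : Fin d → ℝ) (u : Fin d → Fin d → ℝ)
    (ζ : Fin d → ℝ) (t : ℝ) {N : ℕ} {x : Fin d → ℕ} (hx : ∑ j, x j = N) (y : Fin d → ℕ) :
    compTrans d p u ζ t x y = ∑ ν ∈ Finset.Nat.antidiagonalTuple d N,
      coeff (Finsupp.equivFunOnFinite.symm ν)
          (linearFormProd ((of u)ᵀ * diagonal fun k => Real.exp (-t * ζ k)) x) *
        coeff (Finsupp.equivFunOnFinite.symm y) (linearFormProd (of u * diagonal p) ν) := by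
  have hstep : of (oneStep d p u ζ t)
      = (of u)ᵀ * diagonal (fun k => Real.exp (-t * ζ k)) * (of u * diagonal p) := by
    ext i j
    rw [mul_apply]
    simp only [oneStep, of_apply, mul_diagonal, transpose_apply, mul_sum]
    exact sum_congr rfl fun k _ => by ring
  have hG := isHomogeneous_linearFormProd ((of u)ᵀ * diagonal fun k => Real.exp (-t * ζ k)) x
  rw [hx] at hG
  change coeff _ (linearFormProd (of (oneStep d p u ζ t)) x) = _
  rw [hstep, ← aeval_linearFormProd, aeval_eq_sum_antidiagonalTuple_of_isHomogeneous hG,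
    coeff_sum]
  simp only [algebraMap_eq, coeff_C_mul]
  rfl

theorem compTrans_summand_eq [NeZero d] (p : Fin d → ℝ) {u : Fin d → Fin d → ℝ}
    (hu0 : ∀ j, u 0 j = 1) {ζ : Fin d → ℝ} (hζ0 : ζ 0 = 0) (t : ℝ) {N M : ℕ} (hM : M ≤ N)
    {x y : Fin d → ℕ} (hx : ∑ j, x j = N) (hy : ∑ j, y j = N) {n : Fin d → ℕ}
    (hn : n ∈ (Finset.Nat.antidiagonalTuple d M).filter (fun n => n 0 = 0)) :
    coeff (Finsupp.equivFunOnFinite.symm (Function.update n 0 (N - M)))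
        (linearFormProd ((of u)ᵀ * diagonal fun k => Real.exp (-t * ζ k)) x) *
      coeff (Finsupp.equivFunOnFinite.symm y)
        (linearFormProd (of u * diagonal p) (Function.update n 0 (N - M)))
      = multinomialPMF d p y *
          (Real.exp (-t * ∑ i ∈ univ.erase 0, (n i : ℝ) * ζ i) *
            (Nat.multinomial univ (fun j => if j = 0 then N - ∑ i, n i else n j) : ℝ)⁻¹ *
            QK d u n x * QK d u n y) := by
  obtain ⟨rfl, hn0⟩ := by simpa only [mem_filter, Finset.Nat.mem_antidiagonalTuple] using hn
  simp only [← Function.update_apply]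
  set ν := Function.update n 0 (N - ∑ i, n i) with hν
  have hQx : QK d u n x = coeff (Finsupp.equivFunOnFinite.symm ν) (linearFormProd (of u)ᵀ x) := by
    rw [QK_eq_coeff_linearFormProd hu0 hn0 (hx ▸ hM), hx]
  have hQy : coeff (Finsupp.equivFunOnFinite.symm y) (linearFormProd (of u) ν)
      = (Nat.multinomial univ ν : ℝ)⁻¹ * (Nat.multinomial univ y * QK d u n y) := by
    rw [QK_eq_coeff_linearFormProd hu0 hn0 (hy ▸ hM), hy, ← multinomial_mul_coeff_linearFormProd,
      inv_mul_cancel_left₀ (Nat.cast_ne_zero.2 (Nat.multinomial_pos _ _).ne')]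
  have hexp : ∏ k, Real.exp (-t * ζ k) ^ ν k
      = Real.exp (-t * ∑ i ∈ univ.erase 0, (n i : ℝ) * ζ i) := by
    rw [← mul_prod_erase _ _ (mem_univ 0), hζ0, mul_zero, Real.exp_zero, one_pow, one_mul,
      mul_sum, Real.exp_sum]
    refine prod_congr rfl fun i hi => ?_
    rw [← Real.exp_nat_mul, hν, Function.update_of_ne (ne_of_mem_erase hi)]
    ring_nf
  rw [coeff_linearFormProd_mul_diagonal, coeff_linearFormProd_mul_diagonal, hexp, hQx, hQy,
    multinomialPMF]
  ring

end CompositionChain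

theorem composition_chain_spectral_expansion_general
    (d N : ℕ) [NeZero d]
    (p : Fin d → ℝ)
    (u : Fin d → Fin d → ℝ) (hu0 : ∀ j, u 0 j = 1)
    (ζ : Fin d → ℝ) (hζ0 : ζ 0 = 0)
    (t : ℝ)
    (x y : Fin d → ℕ) (hx : ∑ j, x j = N) (hy : ∑ j, y j = N) :
    compTrans d p u ζ t x y =
      multinomialPMF d p y *
        (1 + ∑ M ∈ Finset.Icc 1 N,
          ∑ n ∈ (Finset.Nat.antidiagonalTuple d M).filter (fun n => n 0 = 0),
            Real.exp (-t * ∑ i ∈ Finset.univ.erase 0, (n i : ℝ) * ζ i) *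
              ((Nat.multinomial Finset.univ
                  (fun j => if j = 0 then N - ∑ i, n i else n j) : ℝ))⁻¹ *
              QK d u n x * QK d u n y) := by
  rw [compTrans_eq_sum_antidiagonalTuple p u ζ t hx y,
    Finset.Nat.sum_antidiagonalTuple_eq_sum_filter_update,
    sum_congr rfl fun M hM => sum_congr rfl fun n hn =>
      compTrans_summand_eq p hu0 hζ0 t (mem_Icc.1 hM).2 hx hy hn]
  simp only [← mul_sum]
  rw [Icc_eq_cons_Ioc (Nat.zero_le N), sum_cons, ← Icc_add_one_left_eq_Ioc,
    Finset.Nat.antidiagonalTuple_zero_right, filter_singleton]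
  simp [QK_zero, ← Pi.single_apply, Nat.multinomial_single]

/-- Spectral expansion of a composition Markov chain in multivariate Krawtchouk
polynomials (finite version). -/
theorem composition_chain_spectral_expansion
    (d N : ℕ) [NeZero d] (hd : 2 ≤ d)
    (p : Fin d → ℝ) (hp : ∀ j, 0 < p j) (hpsum : ∑ j, p j = 1)
    (u : Fin d → Fin d → ℝ) (hu0 : ∀ j, u 0 j = 1)
    (horth : ∀ l m, ∑ i, u l i * u m i * p i = if l = m then (1 : ℝ) else 0)
    (ζ : Fin d → ℝ) (hζ0 : ζ 0 = 0) (hζ : ∀ k, k ≠ 0 → 0 < ζ k)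
    (t : ℝ) (ht : 0 ≤ t)
    (hnonneg : ∀ i j, 0 ≤ oneStep d p u ζ t i j)
    (x y : Fin d → ℕ) (hx : ∑ j, x j = N) (hy : ∑ j, y j = N) :
    compTrans d p u ζ t x y =
      multinomialPMF d p y *
        (1 + ∑ M ∈ Finset.Icc 1 N,
          ∑ n ∈ (Finset.Nat.antidiagonalTuple d M).filter (fun n => n 0 = 0),
            Real.exp (-t * ∑ i ∈ Finset.univ.erase 0, (n i : ℝ) * ζ i) *
              ((Nat.multinomial Finset.univ
                  (fun j => if j = 0 then N - ∑ i, n i else n j) : ℝ))⁻¹ *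
              QK d u n x * QK d u n y) :=
  composition_chain_spectral_expansion_general d N p u hu0 ζ hζ0 t x y hx hy
end
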